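/- arXiv:0807.2155 — 5 statements merged into one kernel-verified Lean document; each statement's English description precedes it below -/
import Mathlib

section
/- Fix a real number q with 0 < q < 1. For every X ∈ ℂ and every Λ ∈ ℂ with Λ ≠ 0, the series ∑_{n=0}^∞ q^{n²/4} · Xⁿ · P̄_n(Λ) / ∏_{j=1}^n (1 − qʲ) defining the global q-Whittaker function Ψ̃(X, Λ) of type A₁ converges absolutely. (Theorem 3.2(i) of the paper in the rank-one case.) -/
open scoped BigOperators
open Filter

noncomputable section

/-- Symmetric monomial `M_r(X) = X^r + X^{-r}` for `r ≥ 1`, `M_0 = 1`. -/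
def Msym (r : ℕ) (X : ℂ) : ℂ := if r = 0 then 1 else X ^ r + X⁻¹ ^ r

/-- Continuous q-Hermite Laurent polynomial (Macdonald polynomial of type A₁ at t = 0). -/
def PbarA1 (q : ℝ) (n : ℕ) (X : ℂ) : ℂ :=
  Msym n X + ∑ j ∈ Finset.Icc 1 (n / 2),
    (∏ i ∈ Finset.range j, (1 - (q : ℂ) ^ (n - i)) / (1 - (q : ℂ) ^ (i + 1))) *
      Msym (n - 2 * j) X

/-- Global q-Whittaker function of type A₁. -/
def whitA1 (q : ℝ) (X Λ : ℂ) : ℂ :=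
  ∑' n : ℕ, ((q ^ ((n : ℝ) ^ 2 / 4) : ℝ) : ℂ) * X ^ n * PbarA1 q n Λ /
    ∏ j ∈ Finset.Icc 1 n, (1 - (q : ℂ) ^ j)

/-- Theta function `θ(Λ) = ∑_{j ∈ ℤ} q^{j²/4} Λ^j`. -/
def thetaA1 (q : ℝ) (Λ : ℂ) : ℂ :=
  ∑' j : ℤ, ((q ^ ((j : ℝ) ^ 2 / 4) : ℝ) : ℂ) * Λ ^ j

/-- Rogers Laurent polynomial (symmetric Macdonald polynomial of type A₁). -/
def RogersA1 (q : ℝ) (t : ℂ) (n : ℕ) (X : ℂ) : ℂ :=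
  Msym n X + ∑ j ∈ Finset.Icc 1 (n / 2),
    (∏ i ∈ Finset.range j,
      ((1 - (q : ℂ) ^ (n - i)) * (1 - t * (q : ℂ) ^ i)) /
      ((1 - (q : ℂ) ^ (1 + i)) * (1 - t * (q : ℂ) ^ (n - i - 1)))) *
    Msym (n - 2 * j) X

/-- Global q,t-spherical function of type A₁, with `t = s²`. -/
def sphA1 (q s : ℝ) (X Λ : ℂ) : ℂ :=
  ∑' n : ℕ, (s : ℂ) ^ n * ((q ^ ((n : ℝ) ^ 2 / 4) : ℝ) : ℂ) *
    RogersA1 q ((s : ℂ) ^ 2) n X * RogersA1 q ((s : ℂ) ^ 2) n Λ *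
    ∏ i ∈ Finset.range n,
      ((1 - (s : ℂ) ^ 2 * (q : ℂ) ^ i) * (1 - (s : ℂ) ^ 2 * (q : ℂ) ^ (i + 1))) /
      ((1 - ((s : ℂ) ^ 2) ^ 2 * (q : ℂ) ^ i) * (1 - (q : ℂ) ^ (i + 1)))

/-- Macdonald truncated theta weight function of type A₁. -/
def muA1 (q : ℝ) (t : ℂ) (X : ℂ) : ℂ :=
  ∏' j : ℕ, ((1 - X ^ 2 * (q : ℂ) ^ j) * (1 - X⁻¹ ^ 2 * (q : ℂ) ^ (j + 1))) /
    ((1 - t * X ^ 2 * (q : ℂ) ^ j) * (1 - t * X⁻¹ ^ 2 * (q : ℂ) ^ (j + 1)))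


/-!
The coefficient of `M_{n-2j}` in `P̄_n` is the Gaussian binomial `[n, j]_q ≤ (1 - q)⁻ʲ`, so with
`B = max 1 (max ‖Λ‖ ‖Λ⁻¹‖)` one gets `‖P̄_n(Λ)‖ ≤ 2 (n + 1) (B / (1 - q))ⁿ`, while
`‖∏ (1 - qʲ)‖ ≥ (1 - q)ⁿ`. The `n`-th term is therefore `O(q^{n²/4} Cⁿ)`, and the Gaussian factor
wins: `q^{n²/4} Cⁿ = (q^{n/4} C)ⁿ ≤ 2⁻ⁿ` for large `n`.
-/

open Finset

lemma norm_Msym_le {Λ : ℂ} {B : ℝ} (hΛ : ‖Λ‖ ≤ B) (hΛinv : ‖Λ⁻¹‖ ≤ B) (r : ℕ) :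
    ‖Msym r Λ‖ ≤ 2 * B ^ r := by
  unfold Msym
  split_ifs with hr
  · simp [hr]
  · calc ‖Λ ^ r + Λ⁻¹ ^ r‖ ≤ ‖Λ‖ ^ r + ‖Λ⁻¹‖ ^ r := by
          simpa only [norm_pow] using norm_add_le (Λ ^ r) (Λ⁻¹ ^ r)
      _ ≤ 2 * B ^ r := by linarith [pow_le_pow_left₀ (norm_nonneg _) hΛ r,
          pow_le_pow_left₀ (norm_nonneg _) hΛinv r]

lemma summable_pow_sq_mul_pow {p : ℝ} (hp0 : 0 ≤ p) (hp1 : p < 1) (C : ℝ) :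
    Summable fun n : ℕ => p ^ (n ^ 2) * C ^ n := by
  have hsmall : ∀ᶠ n : ℕ in atTop, ‖p ^ n * C‖ ≤ 1 / 2 := by
    have h := ((tendsto_pow_atTop_nhds_zero_of_lt_one hp0 hp1).mul_const C).norm
    rw [zero_mul, norm_zero] at h
    exact h.eventually (ge_mem_nhds (by norm_num))
  refine summable_geometric_two.of_norm_bounded_eventually_nat (hsmall.mono fun n hn => ?_)
  rw [sq, pow_mul, ← mul_pow, norm_pow]
  exact pow_le_pow_left₀ (norm_nonneg _) hn n

section

variable {q : ℝ}

lemma norm_one_sub_ofReal_pow (hq0 : 0 ≤ q) (hq1 : q ≤ 1) (m : ℕ) :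
    ‖1 - (q : ℂ) ^ m‖ = 1 - q ^ m := by
  rw [← Complex.ofReal_pow, ← Complex.ofReal_one, ← Complex.ofReal_sub, Complex.norm_real,
    Real.norm_of_nonneg (sub_nonneg.2 (pow_le_one₀ hq0 hq1))]

lemma norm_qBinomial_prod_le (hq0 : 0 ≤ q) (hq1 : q < 1) (n j : ℕ) :
    ‖∏ i ∈ range j, (1 - (q : ℂ) ^ (n - i)) / (1 - (q : ℂ) ^ (i + 1))‖ ≤ (1 - q)⁻¹ ^ j := by
  rw [norm_prod]
  refine (prod_le_prod (fun _ _ => norm_nonneg _) fun i _ => ?_).trans_eq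
    (pow_eq_prod_const _ j).symm
  rw [norm_div, norm_one_sub_ofReal_pow hq0 hq1.le, norm_one_sub_ofReal_pow hq0 hq1.le,
    ← one_div]
  have hden : q ^ (i + 1) ≤ q := pow_le_of_le_one hq0 hq1.le i.succ_ne_zero
  gcongr
  linarith [pow_nonneg hq0 (n - i)]

lemma pow_le_norm_prod_one_sub_ofReal_pow (hq0 : 0 ≤ q) (hq1 : q ≤ 1) (n : ℕ) :
    (1 - q) ^ n ≤ ‖∏ j ∈ Icc 1 n, (1 - (q : ℂ) ^ j)‖ := by
  rw [norm_prod]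
  calc (1 - q) ^ n = ∏ _j ∈ Icc 1 n, (1 - q) := by simp
    _ ≤ _ := prod_le_prod (fun _ _ => by linarith) fun j hj => ?_
  rw [norm_one_sub_ofReal_pow hq0 hq1]
  linarith [pow_le_of_le_one hq0 hq1 (by simp only [mem_Icc] at hj; omega : j ≠ 0)]

lemma norm_PbarA1_le (hq0 : 0 ≤ q) (hq1 : q < 1) {Λ : ℂ} {B : ℝ} (hB : 1 ≤ B)
    (hΛ : ‖Λ‖ ≤ B) (hΛinv : ‖Λ⁻¹‖ ≤ B) (n : ℕ) :
    ‖PbarA1 q n Λ‖ ≤ 2 * (n + 1) * (B / (1 - q)) ^ n := by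
  set K := B / (1 - q)
  have hK : B ^ n ≤ K ^ n :=
    pow_le_pow_left₀ (by linarith) (le_div_self (by linarith) (by linarith) (by linarith)) n
  have hterm : ∀ j ∈ Icc 1 (n / 2), ‖(∏ i ∈ range j,
      (1 - (q : ℂ) ^ (n - i)) / (1 - (q : ℂ) ^ (i + 1))) * Msym (n - 2 * j) Λ‖ ≤ 2 * K ^ n := by
    intro j hj
    have hjn : j ≤ n := by simp only [mem_Icc] at hj; omega
    have hinv : 1 ≤ (1 - q)⁻¹ := one_le_inv₀ (by linarith) |>.2 (by linarith)
    calc _ ≤ (1 - q)⁻¹ ^ n * (2 * B ^ n) := by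
          rw [norm_mul]
          gcongr
          · exact (norm_qBinomial_prod_le hq0 hq1 n j).trans (pow_le_pow_right₀ hinv hjn)
          · exact (norm_Msym_le hΛ hΛinv _).trans (by gcongr; omega)
      _ = 2 * K ^ n := by rw [div_pow, inv_pow]; ring
  have hcard : ((n / 2 : ℕ) : ℝ) ≤ n := by exact_mod_cast Nat.div_le_self n 2
  calc ‖PbarA1 q n Λ‖ ≤ 2 * K ^ n + (n / 2 : ℕ) * (2 * K ^ n) := by
        refine (norm_add_le _ _).trans (add_le_add ((norm_Msym_le hΛ hΛinv n).trans
          (by linarith)) ((norm_sum_le _ _).trans ?_))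
        simpa using sum_le_card_nsmul _ _ _ hterm
    _ ≤ 2 * (n + 1) * K ^ n := by
        have hKn : 0 ≤ K ^ n := (pow_nonneg (zero_le_one.trans hB) n).trans hK
        nlinarith [mul_le_mul_of_nonneg_right hcard hKn]

end

def whitA1Term (q : ℝ) (X Λ : ℂ) (n : ℕ) : ℂ :=
  ((q ^ ((n : ℝ) ^ 2 / 4) : ℝ) : ℂ) * X ^ n * PbarA1 q n Λ /
    ∏ j ∈ Finset.Icc 1 n, (1 - (q : ℂ) ^ j)

lemma norm_whitA1Term_le {q : ℝ} (hq0 : 0 ≤ q) (hq1 : q < 1) (X : ℂ) {Λ : ℂ} {B : ℝ}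
    (hB : 1 ≤ B) (hΛ : ‖Λ‖ ≤ B) (hΛinv : ‖Λ⁻¹‖ ≤ B) (n : ℕ) :
    ‖whitA1Term q X Λ n‖ ≤
      2 * (q ^ (1 / 4 : ℝ)) ^ (n ^ 2) * (2 * ‖X‖ * B / (1 - q) ^ 2) ^ n := by
  have hgauss : q ^ ((n : ℝ) ^ 2 / 4) = (q ^ (1 / 4 : ℝ)) ^ (n ^ 2) := by
    rw [← Real.rpow_natCast (q ^ (1 / 4 : ℝ)), ← Real.rpow_mul hq0]
    push_cast
    ring_nf
  have hq : 0 < 1 - q := by linarith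
  have hn : (n : ℝ) + 1 ≤ 2 ^ n := by exact_mod_cast Nat.lt_two_pow_self
  rw [whitA1Term, norm_div, norm_mul, norm_mul, Complex.norm_real, norm_pow, hgauss,
    Real.norm_of_nonneg (by positivity)]
  calc _ ≤ (q ^ (1 / 4 : ℝ)) ^ (n ^ 2) * ‖X‖ ^ n * (2 * (n + 1) * (B / (1 - q)) ^ n) /
        (1 - q) ^ n := by
        gcongr
        · exact norm_PbarA1_le hq0 hq1 hB hΛ hΛinv n
        · exact pow_le_norm_prod_one_sub_ofReal_pow hq0 hq1.le n
    _ ≤ (q ^ (1 / 4 : ℝ)) ^ (n ^ 2) * ‖X‖ ^ n * (2 * 2 ^ n * (B / (1 - q)) ^ n) /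
        (1 - q) ^ n := by gcongr
    _ = _ := by
        have hqn : (1 - q) ^ n ≠ 0 := pow_ne_zero n hq.ne'
        rw [div_pow, div_pow, mul_pow, mul_pow, ← pow_mul, mul_comm 2 n, pow_mul]
        field_simp

theorem whitA1_series_abs_convergent_general (q : ℝ) (hq0 : 0 < q) (hq1 : q < 1)
    (X Λ : ℂ) :
    Summable (fun n : ℕ =>
      ‖((q ^ ((n : ℝ) ^ 2 / 4) : ℝ) : ℂ) * X ^ n * PbarA1 q n Λ /
        ∏ j ∈ Finset.Icc 1 n, (1 - (q : ℂ) ^ j)‖) := by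
  set B := max 1 (max ‖Λ‖ ‖Λ⁻¹‖)
  have hB : 1 ≤ B := le_max_left _ _
  have hΛ : ‖Λ‖ ≤ B := le_max_of_le_right (le_max_left _ _)
  have hΛinv : ‖Λ⁻¹‖ ≤ B := le_max_of_le_right (le_max_right _ _)
  have hgauss : Summable fun n : ℕ =>
      2 * (q ^ (1 / 4 : ℝ)) ^ (n ^ 2) * (2 * ‖X‖ * B / (1 - q) ^ 2) ^ n := by
    simpa only [mul_assoc] using (summable_pow_sq_mul_pow (by positivity)
      (Real.rpow_lt_one hq0.le hq1 (by norm_num)) _).mul_left 2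
  exact hgauss.of_nonneg_of_le (fun _ => norm_nonneg _)
    (norm_whitA1Term_le hq0.le hq1 X hB hΛ hΛinv)

/-- absolute convergence of the global q-Whittaker series of type A₁. -/
theorem whitA1_series_abs_convergent (q : ℝ) (hq0 : 0 < q) (hq1 : q < 1)
    (X Λ : ℂ) (hΛ : Λ ≠ 0) :
    Summable (fun n : ℕ =>
      ‖((q ^ ((n : ℝ) ^ 2 / 4) : ℝ) : ℂ) * X ^ n * PbarA1 q n Λ /
        ∏ j ∈ Finset.Icc 1 n, (1 - (q : ℂ) ^ j)‖) :=
  whitA1_series_abs_convergent_general q hq0 hq1 X Λ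

end
end

section
/- Fix real numbers q and s with 0 < q < 1 and 0 < s < 1 and set t = s². For all X, Λ ∈ ℂ with X ≠ 0 and Λ ≠ 0, the series Ψ_t(X, Λ) = ∑_{n=0}^∞ sⁿ q^{n²/4} P_n(X; q, t) P_n(Λ; q, t) ∏_{i=0}^{n−1} ((1 − t qⁱ)(1 − t q^{i+1})) / ((1 − t² qⁱ)(1 − q^{i+1})) defining the global q,t-spherical function of type A₁ converges absolutely. (Theorem 3.1 of the paper in the rank-one case, equation (4.32).) -/
open scoped BigOperators
open Filter

noncomputable section

/-! Every factor `(1 - a)(1 - b) / ((1 - c)(1 - d))` occurring in the Rogers coefficients and in the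
weight has `a, b ∈ [0, 1]` and `c ≤ q`, `d ≤ s²` (or vice versa), so it is bounded by
`K = ((1 - q)(1 - s²))⁻¹`. Hence `‖P_n(X)‖ ≤ 2 (2 K R_X)ⁿ` and the `n`-th term is at most
`4 Bⁿ q^{n²/4}` for a constant `B`; the Gaussian factor `q^{n²/4} = (q^{1/4})^{n²}` beats any
geometric growth. -/

lemma norm_one_sub_ofReal_le_one {x : ℝ} (h0 : 0 ≤ x) (h1 : x ≤ 1) : ‖1 - (x : ℂ)‖ ≤ 1 := by
  rw [← Complex.ofReal_one, ← Complex.ofReal_sub, Complex.norm_real, Real.norm_eq_abs]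
  exact abs_le.2 ⟨by linarith, by linarith⟩

lemma sub_le_norm_one_sub_ofReal {x c : ℝ} (h : x ≤ c) : 1 - c ≤ ‖1 - (x : ℂ)‖ := by
  rw [← Complex.ofReal_one, ← Complex.ofReal_sub, Complex.norm_real, Real.norm_eq_abs]
  exact (sub_le_sub_left h 1).trans (le_abs_self _)

lemma norm_one_sub_mul_one_sub_div_le {a b c d c₀ d₀ : ℝ} (ha0 : 0 ≤ a) (ha1 : a ≤ 1)
    (hb0 : 0 ≤ b) (hb1 : b ≤ 1) (hc : c ≤ c₀) (hc₀ : c₀ < 1) (hd : d ≤ d₀) (hd₀ : d₀ < 1) :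
    ‖(1 - (a : ℂ)) * (1 - b) / ((1 - c) * (1 - d))‖ ≤ ((1 - c₀) * (1 - d₀))⁻¹ := by
  rw [norm_div, norm_mul, norm_mul, ← one_div]
  refine div_le_div₀ zero_le_one ?_ (by nlinarith) ?_
  · exact mul_le_one₀ (norm_one_sub_ofReal_le_one ha0 ha1) (norm_nonneg _)
      (norm_one_sub_ofReal_le_one hb0 hb1)
  · exact mul_le_mul (sub_le_norm_one_sub_ofReal hc) (sub_le_norm_one_sub_ofReal hd)
      (by linarith) (norm_nonneg _)

lemma norm_prod_range_le_pow {f : ℕ → ℂ} {K : ℝ} (hf : ∀ i, ‖f i‖ ≤ K) (j : ℕ) :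
    ‖∏ i ∈ Finset.range j, f i‖ ≤ K ^ j := by
  rw [norm_prod]
  exact (Finset.prod_le_prod (fun i _ => norm_nonneg (f i)) fun i _ => hf i).trans_eq (by simp)

lemma norm_Msym_le_s4 (r : ℕ) (Y : ℂ) : ‖Msym r Y‖ ≤ 2 * (1 + ‖Y‖ + ‖Y⁻¹‖) ^ r := by
  have hY : ‖Y‖ ≤ 1 + ‖Y‖ + ‖Y⁻¹‖ := by linarith [norm_nonneg Y⁻¹]
  have hY' : ‖Y⁻¹‖ ≤ 1 + ‖Y‖ + ‖Y⁻¹‖ := by linarith [norm_nonneg Y]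
  unfold Msym
  split_ifs with hr
  · simp [hr]
  · calc ‖Y ^ r + Y⁻¹ ^ r‖ ≤ ‖Y‖ ^ r + ‖Y⁻¹‖ ^ r := by
          simpa only [norm_pow] using norm_add_le (Y ^ r) (Y⁻¹ ^ r)
      _ ≤ 2 * (1 + ‖Y‖ + ‖Y⁻¹‖) ^ r := by
          linarith [pow_le_pow_left₀ (norm_nonneg Y) hY r,
            pow_le_pow_left₀ (norm_nonneg Y⁻¹) hY' r]

section Bounds

variable {q s : ℝ}

lemma norm_rogersA1_coeff_le (hq0 : 0 ≤ q) (hq1 : q < 1) (hs : s ^ 2 < 1) (n j : ℕ) :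
    ‖∏ i ∈ Finset.range j,
      ((1 - (q : ℂ) ^ (n - i)) * (1 - (s : ℂ) ^ 2 * (q : ℂ) ^ i)) /
      ((1 - (q : ℂ) ^ (1 + i)) * (1 - (s : ℂ) ^ 2 * (q : ℂ) ^ (n - i - 1)))‖ ≤
      ((1 - q) * (1 - s ^ 2))⁻¹ ^ j := by
  have hs0 : 0 ≤ s ^ 2 := sq_nonneg s
  refine norm_prod_range_le_pow (fun i => ?_) j
  have := norm_one_sub_mul_one_sub_div_le (a := q ^ (n - i)) (b := s ^ 2 * q ^ i)
    (c := q ^ (1 + i)) (d := s ^ 2 * q ^ (n - i - 1)) (pow_nonneg hq0 _)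
    (pow_le_one₀ hq0 hq1.le) (by positivity) (mul_le_one₀ hs.le (by positivity)
      (pow_le_one₀ hq0 hq1.le)) (pow_le_of_le_one hq0 hq1.le (by omega)) hq1
    (mul_le_of_le_one_right hs0 (pow_le_one₀ hq0 hq1.le)) hs
  exact_mod_cast this

lemma norm_weight_le (hq0 : 0 ≤ q) (hq1 : q < 1) (hs : s ^ 2 < 1) (n : ℕ) :
    ‖∏ i ∈ Finset.range n,
      ((1 - (s : ℂ) ^ 2 * (q : ℂ) ^ i) * (1 - (s : ℂ) ^ 2 * (q : ℂ) ^ (i + 1))) /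
      ((1 - ((s : ℂ) ^ 2) ^ 2 * (q : ℂ) ^ i) * (1 - (q : ℂ) ^ (i + 1)))‖ ≤
      ((1 - q) * (1 - s ^ 2))⁻¹ ^ n := by
  have hs0 : 0 ≤ s ^ 2 := sq_nonneg s
  refine norm_prod_range_le_pow (fun i => ?_) n
  have := norm_one_sub_mul_one_sub_div_le (a := s ^ 2 * q ^ i) (b := s ^ 2 * q ^ (i + 1))
    (c := (s ^ 2) ^ 2 * q ^ i) (d := q ^ (i + 1)) (by positivity)
    (mul_le_one₀ hs.le (by positivity) (pow_le_one₀ hq0 hq1.le)) (by positivity)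
    (mul_le_one₀ hs.le (by positivity) (pow_le_one₀ hq0 hq1.le))
    ((mul_le_of_le_one_right (by positivity) (pow_le_one₀ hq0 hq1.le)).trans
      (pow_le_of_le_one hs0 hs.le two_ne_zero)) hs
    (pow_le_of_le_one hq0 hq1.le (Nat.succ_ne_zero i)) hq1
  rw [mul_comm (1 - q)]
  exact_mod_cast this

lemma norm_rogersA1_le (hq0 : 0 ≤ q) (hq1 : q < 1) (hs : s ^ 2 < 1) (n : ℕ) (Y : ℂ) :
    ‖RogersA1 q ((s : ℂ) ^ 2) n Y‖ ≤
      2 * (2 * ((1 - q) * (1 - s ^ 2))⁻¹ * (1 + ‖Y‖ + ‖Y⁻¹‖)) ^ n := by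
  set K := ((1 - q) * (1 - s ^ 2))⁻¹
  set R := 1 + ‖Y‖ + ‖Y⁻¹‖
  have hK : 1 ≤ K := (one_le_inv₀ (by nlinarith)).2 (by nlinarith)
  have hMsym : ∀ r ≤ n, ‖Msym r Y‖ ≤ 2 * R ^ n := fun r hr =>
    (norm_Msym_le_s4 r Y).trans (by gcongr; linarith [norm_nonneg Y, norm_nonneg Y⁻¹])
  have hcard : ((n / 2 : ℕ) : ℝ) + 1 ≤ 2 ^ n := by
    exact_mod_cast (Nat.add_one_le_of_lt ((Nat.div_le_self n 2).trans_lt Nat.lt_two_pow_self))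
  unfold RogersA1
  calc _ ≤ ‖Msym n Y‖ + ∑ j ∈ Finset.Icc 1 (n / 2), ‖(∏ i ∈ Finset.range j,
          ((1 - (q : ℂ) ^ (n - i)) * (1 - (s : ℂ) ^ 2 * (q : ℂ) ^ i)) /
          ((1 - (q : ℂ) ^ (1 + i)) * (1 - (s : ℂ) ^ 2 * (q : ℂ) ^ (n - i - 1)))) *
          Msym (n - 2 * j) Y‖ :=
        (norm_add_le _ _).trans (add_le_add_right (norm_sum_le _ _) _)
    _ ≤ K ^ n * (2 * R ^ n) + ∑ j ∈ Finset.Icc 1 (n / 2), K ^ n * (2 * R ^ n) := by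
        refine add_le_add ((hMsym n le_rfl).trans
          (le_mul_of_one_le_left (by positivity) (one_le_pow₀ hK)))
          (Finset.sum_le_sum fun j hj => ?_)
        have hjn : j ≤ n := (Finset.mem_Icc.1 hj).2.trans (Nat.div_le_self n 2)
        rw [norm_mul]
        exact mul_le_mul ((norm_rogersA1_coeff_le hq0 hq1 hs n j).trans
          (pow_le_pow_right₀ hK hjn)) (hMsym _ (Nat.sub_le n _)) (norm_nonneg _) (by positivity)
    _ = (((n / 2 : ℕ) : ℝ) + 1) * (K ^ n * (2 * R ^ n)) := by
        rw [Finset.sum_const, Nat.card_Icc, add_tsub_cancel_right, nsmul_eq_mul]; ring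
    _ ≤ 2 ^ n * (K ^ n * (2 * R ^ n)) := by gcongr
    _ = 2 * (2 * K * R) ^ n := by rw [mul_pow, mul_pow]; ring

def sphA1Term (q s : ℝ) (X Λ : ℂ) (n : ℕ) : ℂ :=
  (s : ℂ) ^ n * ((q ^ ((n : ℝ) ^ 2 / 4) : ℝ) : ℂ) *
    RogersA1 q ((s : ℂ) ^ 2) n X * RogersA1 q ((s : ℂ) ^ 2) n Λ *
    ∏ i ∈ Finset.range n,
      ((1 - (s : ℂ) ^ 2 * (q : ℂ) ^ i) * (1 - (s : ℂ) ^ 2 * (q : ℂ) ^ (i + 1))) /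
      ((1 - ((s : ℂ) ^ 2) ^ 2 * (q : ℂ) ^ i) * (1 - (q : ℂ) ^ (i + 1)))

lemma exists_norm_sphA1Term_le (hq0 : 0 ≤ q) (hq1 : q < 1) (hs : s ^ 2 < 1) (X Λ : ℂ) :
    ∃ B : ℝ, ∀ n : ℕ, ‖sphA1Term q s X Λ n‖ ≤ 4 * (B ^ n * q ^ ((n : ℝ) ^ 2 / 4)) := by
  set K := ((1 - q) * (1 - s ^ 2))⁻¹
  set RX := 1 + ‖X‖ + ‖X⁻¹‖
  set RΛ := 1 + ‖Λ‖ + ‖Λ⁻¹‖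
  have hK : 0 ≤ K := inv_nonneg.2 (by nlinarith)
  have hRX : 0 ≤ RX := by positivity
  have hRΛ : 0 ≤ RΛ := by positivity
  refine ⟨|s| * (2 * K * RX) * (2 * K * RΛ) * K, fun n => ?_⟩
  have hgauss : ‖((q ^ ((n : ℝ) ^ 2 / 4) : ℝ) : ℂ)‖ = q ^ ((n : ℝ) ^ 2 / 4) := by
    rw [Complex.norm_real, Real.norm_of_nonneg (by positivity)]
  rw [sphA1Term, norm_mul, norm_mul, norm_mul, norm_mul, norm_pow, hgauss, Complex.norm_real,
    Real.norm_eq_abs]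
  calc _ ≤ |s| ^ n * q ^ ((n : ℝ) ^ 2 / 4) * (2 * (2 * K * RX) ^ n) * (2 * (2 * K * RΛ) ^ n) *
        K ^ n := by
        gcongr
        exacts [norm_rogersA1_le hq0 hq1 hs n X, norm_rogersA1_le hq0 hq1 hs n Λ,
          norm_weight_le hq0 hq1 hs n]
    _ = _ := by simp only [mul_pow]; ring

end Bounds

lemma summable_pow_mul_pow_sq {u : ℝ} (hu0 : 0 ≤ u) (hu1 : u < 1) (B : ℝ) :
    Summable fun n : ℕ => B ^ n * u ^ (n ^ 2) := by
  have hlim : Tendsto (fun n : ℕ => |B| * u ^ n) atTop (nhds 0) := by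
    simpa using (tendsto_pow_atTop_nhds_zero_of_lt_one hu0 hu1).const_mul |B|
  refine (summable_geometric_two).of_norm_bounded_eventually_nat ?_
  filter_upwards [hlim.eventually (ge_mem_nhds (by norm_num : (0 : ℝ) < 1 / 2))] with n hn
  calc ‖B ^ n * u ^ (n ^ 2)‖ = (|B| * u ^ n) ^ n := by
        rw [Real.norm_eq_abs, abs_mul, abs_pow, abs_pow, abs_of_nonneg hu0, sq, pow_mul,
          mul_pow]
    _ ≤ (1 / 2) ^ n := pow_le_pow_left₀ (by positivity) hn n

lemma rpow_sq_div_four_eq_pow {q : ℝ} (hq : 0 ≤ q) (n : ℕ) :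
    q ^ ((n : ℝ) ^ 2 / 4) = (q ^ (4⁻¹ : ℝ)) ^ (n ^ 2) := by
  rw [← Real.rpow_mul_natCast hq]
  congr 1
  push_cast
  ring

theorem sphA1_series_abs_convergent_general (q s : ℝ) (hq0 : 0 < q) (hq1 : q < 1)
    (hs0 : 0 < s) (hs1 : s < 1) (X Λ : ℂ) :
    Summable (fun n : ℕ =>
      ‖(s : ℂ) ^ n * ((q ^ ((n : ℝ) ^ 2 / 4) : ℝ) : ℂ) *
        RogersA1 q ((s : ℂ) ^ 2) n X * RogersA1 q ((s : ℂ) ^ 2) n Λ *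
        ∏ i ∈ Finset.range n,
          ((1 - (s : ℂ) ^ 2 * (q : ℂ) ^ i) * (1 - (s : ℂ) ^ 2 * (q : ℂ) ^ (i + 1))) /
          ((1 - ((s : ℂ) ^ 2) ^ 2 * (q : ℂ) ^ i) * (1 - (q : ℂ) ^ (i + 1)))‖) := by
  have hs : s ^ 2 < 1 := by nlinarith
  have hu1 : q ^ (4⁻¹ : ℝ) < 1 := Real.rpow_lt_one hq0.le hq1 (by norm_num)
  obtain ⟨B, hB⟩ := exists_norm_sphA1Term_le hq0.le hq1 hs X Λ
  refine Summable.of_nonneg_of_le (fun n => norm_nonneg _) (fun n => ?_)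
    ((summable_pow_mul_pow_sq (by positivity) hu1 B).mul_left 4)
  rw [← rpow_sq_div_four_eq_pow hq0.le]
  exact hB n

/-- absolute convergence of the global q,t-spherical series of type A₁. -/
theorem sphA1_series_abs_convergent (q s : ℝ) (hq0 : 0 < q) (hq1 : q < 1)
    (hs0 : 0 < s) (hs1 : s < 1) (X Λ : ℂ) (hX : X ≠ 0) (hΛ : Λ ≠ 0) :
    Summable (fun n : ℕ =>
      ‖(s : ℂ) ^ n * ((q ^ ((n : ℝ) ^ 2 / 4) : ℝ) : ℂ) *
        RogersA1 q ((s : ℂ) ^ 2) n X * RogersA1 q ((s : ℂ) ^ 2) n Λ *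
        ∏ i ∈ Finset.range n,
          ((1 - (s : ℂ) ^ 2 * (q : ℂ) ^ i) * (1 - (s : ℂ) ^ 2 * (q : ℂ) ^ (i + 1))) /
          ((1 - ((s : ℂ) ^ 2) ^ 2 * (q : ℂ) ^ i) * (1 - (q : ℂ) ^ (i + 1)))‖) :=
  sphA1_series_abs_convergent_general q s hq0 hq1 hs0 hs1 X Λ
end
end

section
/- Fix a real number q with 0 < q < 1. For all X, Λ ∈ ℂ with X ≠ 0 and Λ ≠ 0, the Whittaker limit of the global q,t-spherical function of type A₁ exists and equals the global q-Whittaker function: lim_{s → 0⁺} Ψ_{s²}(X/s, Λ) = Ψ̃(X, Λ), where for each 0 < s < 1 one takes t = s². (The existence of the Whittaker limit, equation (3.19), and Theorem 3.2(i) of the paper in the rank-one case.) -/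
/-! Substituting `X ↦ X / s`, the `n`-th term of `Ψ_{s²}(X/s, Λ)` is
`q^{n²/4} · (sⁿ P_n(X/s; q, s²)) · P_n(Λ; q, s²) · w_n(s²)`, with `w_n(t)` the product weight
of `Ψ_t`. As `s → 0`, every monomial of `sⁿ P_n(X/s)` except `Xⁿ` keeps a positive power of `s`,
`P_n(Λ; q, t) → P̄_n(Λ)` and `w_n(t) → 1/(q; q)_n`. For `|s|² ≤ q` all three factors are `O(Cⁿ)`
uniformly in `s`, and the Gaussian factor `q^{n²/4}` makes `∑ q^{n²/4} Cⁿ` converge, so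
Tannery's theorem (dominated convergence for series) lets the limit pass through the sum. -/

open scoped BigOperators
open Filter

noncomputable section

open Topology

def rogersCoeffA1 (q : ℝ) (t : ℂ) (n j : ℕ) : ℂ :=
  ∏ i ∈ Finset.range j, ((1 - (q : ℂ) ^ (n - i)) * (1 - t * (q : ℂ) ^ i)) /
    ((1 - (q : ℂ) ^ (1 + i)) * (1 - t * (q : ℂ) ^ (n - i - 1)))

theorem RogersA1_eq_sum (q : ℝ) (t : ℂ) (n : ℕ) (X : ℂ) :
    RogersA1 q t n X =
      Msym n X + ∑ j ∈ Finset.Icc 1 (n / 2), rogersCoeffA1 q t n j * Msym (n - 2 * j) X :=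
  rfl

def sphWeightA1 (q : ℝ) (t : ℂ) (n : ℕ) : ℂ :=
  ∏ i ∈ Finset.range n, ((1 - t * (q : ℂ) ^ i) * (1 - t * (q : ℂ) ^ (i + 1))) /
    ((1 - t ^ 2 * (q : ℂ) ^ i) * (1 - (q : ℂ) ^ (i + 1)))

def sphTermA1 (q : ℝ) (s X Λ : ℂ) (n : ℕ) : ℂ :=
  s ^ n * ((q ^ ((n : ℝ) ^ 2 / 4) : ℝ) : ℂ) * RogersA1 q (s ^ 2) n X * RogersA1 q (s ^ 2) n Λ *
    sphWeightA1 q (s ^ 2) n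

theorem sphA1_eq_tsum_sphTermA1 (q s : ℝ) (X Λ : ℂ) :
    sphA1 q s X Λ = ∑' n, sphTermA1 q s X Λ n :=
  rfl

theorem one_sub_ofReal_pow_ne_zero {q : ℝ} (hq0 : 0 ≤ q) (hq1 : q < 1) {k : ℕ} (hk : k ≠ 0) :
    1 - (q : ℂ) ^ k ≠ 0 := by
  rw [sub_ne_zero, ne_comm]
  exact_mod_cast (pow_lt_one₀ hq0 hq1 hk).ne

theorem norm_ofReal_pow_le_one {q : ℝ} (hq0 : 0 ≤ q) (hq1 : q ≤ 1) (k : ℕ) :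
    ‖(q : ℂ) ^ k‖ ≤ 1 := by
  rw [norm_pow, Complex.norm_of_nonneg hq0]
  exact pow_le_one₀ hq0 hq1

theorem norm_ofReal_pow_le_self {q : ℝ} (hq0 : 0 ≤ q) (hq1 : q ≤ 1) {k : ℕ} (hk : k ≠ 0) :
    ‖(q : ℂ) ^ k‖ ≤ q := by
  rw [norm_pow, Complex.norm_of_nonneg hq0]
  exact pow_le_of_le_one hq0 hq1 hk

theorem norm_mul_ofReal_pow_le {q r : ℝ} {t : ℂ} (hq0 : 0 ≤ q) (hq1 : q ≤ 1) (ht : ‖t‖ ≤ r)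
    (k : ℕ) : ‖t * (q : ℂ) ^ k‖ ≤ r := by
  rw [norm_mul]
  exact (mul_le_of_le_one_right (norm_nonneg t) (norm_ofReal_pow_le_one hq0 hq1 k)).trans ht

theorem norm_one_sub_mul_one_sub_div_le_s6 {𝕜 : Type*} [NormedField 𝕜] {a b c d : 𝕜} {r : ℝ}
    (ha : ‖a‖ ≤ 1) (hb : ‖b‖ ≤ 1) (hc : ‖c‖ ≤ r) (hd : ‖d‖ ≤ r) (hr : r < 1) :
    ‖(1 - a) * (1 - b) / ((1 - c) * (1 - d))‖ ≤ 4 / (1 - r) ^ 2 := by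
  have hnum {z : 𝕜} (hz : ‖z‖ ≤ 1) : ‖1 - z‖ ≤ 2 := by
    linarith [norm_sub_le (1 : 𝕜) z, norm_one (α := 𝕜)]
  have hden {z : 𝕜} (hz : ‖z‖ ≤ r) : 1 - r ≤ ‖1 - z‖ := by
    linarith [norm_sub_norm_le (1 : 𝕜) z, norm_one (α := 𝕜)]
  rw [norm_div, norm_mul, norm_mul, sq, show (4 : ℝ) = 2 * 2 by norm_num]
  have hr' : 0 < 1 - r := by linarith
  exact div_le_div₀ (by norm_num) (mul_le_mul (hnum ha) (hnum hb) (norm_nonneg _) (by norm_num))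
    (mul_pos hr' hr') (mul_le_mul (hden hc) (hden hd) hr'.le (norm_nonneg _))

theorem one_le_four_div_one_sub_sq {q : ℝ} (hq0 : 0 ≤ q) (hq1 : q < 1) :
    1 ≤ 4 / (1 - q) ^ 2 := by
  rw [le_div_iff₀ (by nlinarith)]
  nlinarith

theorem norm_prod_le_pow_card {ι R : Type*} [NormedCommRing R] [NormOneClass R] {s : Finset ι}
    {f : ι → R} {C : ℝ}
    (h : ∀ i ∈ s, ‖f i‖ ≤ C) : ‖∏ i ∈ s, f i‖ ≤ C ^ s.card :=
  (Finset.norm_prod_le s f).trans <| (Finset.prod_le_prod (fun _ _ => norm_nonneg _) h).trans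
    (Finset.prod_const C).le

theorem norm_rogersCoeffA1_le {q : ℝ} (hq0 : 0 ≤ q) (hq1 : q < 1) {t : ℂ} (ht : ‖t‖ ≤ q)
    {n j : ℕ} (hj : j ≤ n) :
    ‖rogersCoeffA1 q t n j‖ ≤ (4 / (1 - q) ^ 2) ^ n := by
  refine (norm_prod_le_pow_card (C := 4 / (1 - q) ^ 2) fun i _ => ?_).trans ?_
  · exact norm_one_sub_mul_one_sub_div_le_s6 (norm_ofReal_pow_le_one hq0 hq1.le _)
      ((norm_mul_ofReal_pow_le hq0 hq1.le ht i).trans hq1.le)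
      (norm_ofReal_pow_le_self hq0 hq1.le (k := 1 + i) (by omega))
      (norm_mul_ofReal_pow_le hq0 hq1.le ht _) hq1
  · rw [Finset.card_range]
    exact pow_le_pow_right₀ (one_le_four_div_one_sub_sq hq0 hq1) hj

theorem norm_sphWeightA1_le {q : ℝ} (hq0 : 0 ≤ q) (hq1 : q < 1) {t : ℂ} (ht : ‖t‖ ≤ q)
    (n : ℕ) : ‖sphWeightA1 q t n‖ ≤ (4 / (1 - q) ^ 2) ^ n := by
  have ht2 : ‖t ^ 2‖ ≤ q := by
    rw [norm_pow]; nlinarith [norm_nonneg t]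
  refine (norm_prod_le_pow_card fun i _ => ?_).trans_eq (by rw [Finset.card_range])
  exact norm_one_sub_mul_one_sub_div_le_s6 ((norm_mul_ofReal_pow_le hq0 hq1.le ht i).trans hq1.le)
    ((norm_mul_ofReal_pow_le hq0 hq1.le ht (i + 1)).trans hq1.le)
    (norm_mul_ofReal_pow_le hq0 hq1.le ht2 i) (norm_ofReal_pow_le_self hq0 hq1.le i.succ_ne_zero)
    hq1

def laurentBound (Y : ℂ) : ℝ := max (max ‖Y‖ ‖Y⁻¹‖) 1

theorem one_le_laurentBound (Y : ℂ) : 1 ≤ laurentBound Y := le_max_right _ _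

theorem norm_le_laurentBound (Y : ℂ) : ‖Y‖ ≤ laurentBound Y :=
  le_max_of_le_left (le_max_left _ _)

theorem norm_inv_le_laurentBound (Y : ℂ) : ‖Y⁻¹‖ ≤ laurentBound Y :=
  le_max_of_le_left (le_max_right _ _)

theorem pow_mul_Msym_div {s : ℂ} (hs : s ≠ 0) (Y : ℂ) {r n : ℕ} (hr : r ≤ n) :
    s ^ n * Msym r (Y / s) =
      if r = 0 then s ^ n else s ^ (n - r) * Y ^ r + s ^ (n + r) * Y⁻¹ ^ r := by
  obtain ⟨m, rfl⟩ := Nat.exists_eq_add_of_le' hr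
  split_ifs with hr0
  · simp [Msym, hr0]
  simp only [Msym, if_neg hr0, Nat.add_sub_cancel, inv_div]
  have h : s ^ r * (s ^ r)⁻¹ = 1 := mul_inv_cancel₀ (pow_ne_zero r hs)
  linear_combination (s ^ m * Y ^ r) * h

theorem norm_pow_mul_Msym_div_le {s : ℂ} (hs0 : s ≠ 0) (hs1 : ‖s‖ ≤ 1) (Y : ℂ) {r n : ℕ}
    (hr : r ≤ n) : ‖s ^ n * Msym r (Y / s)‖ ≤ 2 * laurentBound Y ^ n := by
  set C := laurentBound Y
  have hC : 1 ≤ C := one_le_laurentBound Y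
  have hpow {z : ℂ} (hz : ‖z‖ ≤ C) : ‖z‖ ^ r ≤ C ^ n :=
    (pow_le_pow_left₀ (norm_nonneg z) hz r).trans (pow_le_pow_right₀ hC hr)
  have hs {k : ℕ} : ‖s ^ k‖ ≤ 1 := by rw [norm_pow]; exact pow_le_one₀ (norm_nonneg s) hs1
  have hCn : 1 ≤ C ^ n := one_le_pow₀ hC
  rw [pow_mul_Msym_div hs0 Y hr]
  split_ifs
  · linarith [@hs n]
  · calc ‖s ^ (n - r) * Y ^ r + s ^ (n + r) * Y⁻¹ ^ r‖
          ≤ ‖s ^ (n - r)‖ * ‖Y‖ ^ r + ‖s ^ (n + r)‖ * ‖Y⁻¹‖ ^ r := by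
            simpa only [norm_mul, norm_pow] using
              norm_add_le (s ^ (n - r) * Y ^ r) (s ^ (n + r) * Y⁻¹ ^ r)
      _ ≤ 1 * C ^ n + 1 * C ^ n := by
            gcongr
            exacts [hs, hpow (norm_le_laurentBound Y), hs, hpow (norm_inv_le_laurentBound Y)]
      _ = 2 * C ^ n := by ring

theorem tendsto_pow_mul_Msym_div (Y : ℂ) {r n : ℕ} (hr : r ≤ n) :
    Tendsto (fun s : ℂ => s ^ n * Msym r (Y / s)) (𝓝[≠] 0) (𝓝 (if r = n then Y ^ n else 0)) := by
  set p : ℂ → ℂ := fun s =>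
    if r = 0 then s ^ n else s ^ (n - r) * Y ^ r + s ^ (n + r) * Y⁻¹ ^ r
  have hp : Continuous p := by
    by_cases hr0 : r = 0 <;> simp only [p, hr0, if_true, if_false] <;> fun_prop
  have hp0 : p 0 = if r = n then Y ^ n else 0 := by
    simp only [p]
    split_ifs with h0 hrn <;> subst_vars <;> simp [zero_pow_eq, *] <;>
      intros <;> omega
  rw [← hp0]
  refine (hp.tendsto 0).mono_left nhdsWithin_le_nhds |>.congr' ?_
  filter_upwards [self_mem_nhdsWithin] with s hs
  exact (pow_mul_Msym_div hs Y hr).symm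

theorem norm_pow_mul_RogersA1_div_le {q : ℝ} (hq0 : 0 ≤ q) (hq1 : q < 1) {t s : ℂ}
    (ht : ‖t‖ ≤ q) (hs0 : s ≠ 0) (hs1 : ‖s‖ ≤ 1) (Y : ℂ) (n : ℕ) :
    ‖s ^ n * RogersA1 q t n (Y / s)‖ ≤
      2 ^ n * ((4 / (1 - q) ^ 2) ^ n * (2 * laurentBound Y ^ n)) := by
  set K := (4 / (1 - q) ^ 2) ^ n
  set B := 2 * laurentBound Y ^ n
  have hK : 1 ≤ K := one_le_pow₀ (one_le_four_div_one_sub_sq hq0 hq1)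
  have hB : 0 ≤ B := (norm_nonneg _).trans (norm_pow_mul_Msym_div_le hs0 hs1 Y le_rfl)
  have hterm : ∀ j ∈ Finset.Icc 1 (n / 2),
      ‖s ^ n * (rogersCoeffA1 q t n j * Msym (n - 2 * j) (Y / s))‖ ≤ K * B := by
    intro j hj
    rw [mul_left_comm, norm_mul]
    exact mul_le_mul (norm_rogersCoeffA1_le hq0 hq1 ht (by grind))
      (norm_pow_mul_Msym_div_le hs0 hs1 Y (Nat.sub_le n _)) (norm_nonneg _) (by positivity)
  have hn : ((n / 2 : ℕ) : ℝ) + 1 ≤ 2 ^ n := by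
    exact_mod_cast (Nat.div_le_self n 2).trans_lt Nat.lt_two_pow_self
  rw [RogersA1_eq_sum, mul_add, Finset.mul_sum]
  calc _ ≤ B + (n / 2 : ℕ) * (K * B) := by
        refine norm_add_le_of_le (norm_pow_mul_Msym_div_le hs0 hs1 Y le_rfl) ?_
        refine (norm_sum_le _ _).trans ?_
        simpa using Finset.sum_le_card_nsmul _ _ _ hterm
    _ ≤ ((n / 2 : ℕ) + 1) * (K * B) := by nlinarith
    _ ≤ 2 ^ n * (K * B) := by gcongr

theorem norm_RogersA1_le {q : ℝ} (hq0 : 0 ≤ q) (hq1 : q < 1) {t : ℂ} (ht : ‖t‖ ≤ q)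
    (Y : ℂ) (n : ℕ) :
    ‖RogersA1 q t n Y‖ ≤ 2 ^ n * ((4 / (1 - q) ^ 2) ^ n * (2 * laurentBound Y ^ n)) := by
  simpa using norm_pow_mul_RogersA1_div_le hq0 hq1 ht one_ne_zero (by simp) Y n

theorem continuousAt_rogersCoeffA1 {q : ℝ} (hq0 : 0 ≤ q) (hq1 : q < 1) (n j : ℕ) :
    ContinuousAt (fun t => rogersCoeffA1 q t n j) 0 := by
  refine tendsto_finsetProd _ fun i _ => ContinuousAt.div (by fun_prop) (by fun_prop) ?_
  simpa using one_sub_ofReal_pow_ne_zero hq0 hq1 (k := 1 + i) (by omega)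

theorem RogersA1_zero (q : ℝ) (n : ℕ) (X : ℂ) : RogersA1 q 0 n X = PbarA1 q n X := by
  simp [RogersA1, PbarA1, add_comm 1]

theorem tendsto_RogersA1_PbarA1 {q : ℝ} (hq0 : 0 ≤ q) (hq1 : q < 1) (n : ℕ) (X : ℂ) :
    Tendsto (fun t => RogersA1 q t n X) (𝓝 0) (𝓝 (PbarA1 q n X)) := by
  rw [← RogersA1_zero]
  exact tendsto_const_nhds.add <| tendsto_finsetSum _ fun j _ =>
    (continuousAt_rogersCoeffA1 hq0 hq1 n j).tendsto.mul tendsto_const_nhds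

theorem tendsto_sq_nhdsNE_zero : Tendsto (fun s : ℂ => s ^ 2) (𝓝[≠] 0) (𝓝 0) := by
  simpa using ((continuous_pow 2).tendsto (0 : ℂ)).mono_left nhdsWithin_le_nhds

theorem tendsto_pow_mul_RogersA1_div {q : ℝ} (hq0 : 0 ≤ q) (hq1 : q < 1) (Y : ℂ) (n : ℕ) :
    Tendsto (fun s => s ^ n * RogersA1 q (s ^ 2) n (Y / s)) (𝓝[≠] 0) (𝓝 (Y ^ n)) := by
  have hlower : ∀ j ∈ Finset.Icc 1 (n / 2),
      Tendsto (fun s => s ^ n * (rogersCoeffA1 q (s ^ 2) n j * Msym (n - 2 * j) (Y / s)))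
        (𝓝[≠] 0) (𝓝 0) := by
    intro j hj
    have hM := tendsto_pow_mul_Msym_div Y (Nat.sub_le n (2 * j))
    rw [if_neg (by grind)] at hM
    simpa [mul_left_comm] using
      ((continuousAt_rogersCoeffA1 hq0 hq1 n j).tendsto.comp tendsto_sq_nhdsNE_zero).mul hM
  simp_rw [RogersA1_eq_sum, mul_add, Finset.mul_sum]
  simpa using (tendsto_pow_mul_Msym_div Y le_rfl).add (tendsto_finsetSum _ hlower)

theorem tendsto_sphWeightA1 {q : ℝ} (hq0 : 0 ≤ q) (hq1 : q < 1) (n : ℕ) :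
    Tendsto (fun t => sphWeightA1 q t n) (𝓝 0)
      (𝓝 (∏ j ∈ Finset.Icc 1 n, (1 - (q : ℂ) ^ j))⁻¹) := by
  have hden (i : ℕ) : 1 - (q : ℂ) ^ (i + 1) ≠ 0 := one_sub_ofReal_pow_ne_zero hq0 hq1 i.succ_ne_zero
  have h0 : sphWeightA1 q 0 n = (∏ j ∈ Finset.Icc 1 n, (1 - (q : ℂ) ^ j))⁻¹ := by
    rw [← Finset.Ico_add_one_right_eq_Icc, Finset.prod_Ico_eq_prod_range, ← Finset.prod_inv_distrib]
    simp [sphWeightA1, add_comm 1]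
  rw [← h0]
  exact tendsto_finsetProd _ fun i _ =>
    ContinuousAt.div (by fun_prop) (by fun_prop) (by simpa using hden i)

theorem tendsto_sphTermA1 {q : ℝ} (hq0 : 0 ≤ q) (hq1 : q < 1) (X Λ : ℂ) (n : ℕ) :
    Tendsto (fun s => sphTermA1 q s (X / s) Λ n) (𝓝[≠] 0)
      (𝓝 (((q ^ ((n : ℝ) ^ 2 / 4) : ℝ) : ℂ) * X ^ n * PbarA1 q n Λ /
        ∏ j ∈ Finset.Icc 1 n, (1 - (q : ℂ) ^ j))) := by
  have h := (((tendsto_const_nhds (x := ((q ^ ((n : ℝ) ^ 2 / 4) : ℝ) : ℂ))).mul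
    (tendsto_pow_mul_RogersA1_div hq0 hq1 X n)).mul
    ((tendsto_RogersA1_PbarA1 hq0 hq1 n Λ).comp tendsto_sq_nhdsNE_zero)).mul
    ((tendsto_sphWeightA1 hq0 hq1 n).comp tendsto_sq_nhdsNE_zero)
  rw [div_eq_mul_inv]
  refine h.congr fun s => ?_
  simp only [sphTermA1, Function.comp_apply]
  ring

theorem norm_sphTermA1_le {q : ℝ} (hq0 : 0 ≤ q) (hq1 : q < 1) {s : ℂ} (hs0 : s ≠ 0)
    (hs : ‖s ^ 2‖ ≤ q) (X Λ : ℂ) (n : ℕ) :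
    ‖sphTermA1 q s (X / s) Λ n‖ ≤ 4 * (q ^ ((n : ℝ) ^ 2 / 4) *
      (2 * (4 / (1 - q) ^ 2) * laurentBound X *
        (2 * (4 / (1 - q) ^ 2) * laurentBound Λ) * (4 / (1 - q) ^ 2)) ^ n) := by
  have hs1 : ‖s‖ ≤ 1 := by
    rw [norm_pow] at hs; nlinarith [norm_nonneg s]
  have hQ : ‖((q ^ ((n : ℝ) ^ 2 / 4) : ℝ) : ℂ)‖ = q ^ ((n : ℝ) ^ 2 / 4) :=
    Complex.norm_of_nonneg (Real.rpow_nonneg hq0 _)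
  calc ‖sphTermA1 q s (X / s) Λ n‖
      = ‖((q ^ ((n : ℝ) ^ 2 / 4) : ℝ) : ℂ)‖ * ‖s ^ n * RogersA1 q (s ^ 2) n (X / s)‖ *
          ‖RogersA1 q (s ^ 2) n Λ‖ * ‖sphWeightA1 q (s ^ 2) n‖ := by
        simp only [sphTermA1, ← norm_mul]; ring_nf
    _ ≤ q ^ ((n : ℝ) ^ 2 / 4) *
          (2 ^ n * ((4 / (1 - q) ^ 2) ^ n * (2 * laurentBound X ^ n))) *
          (2 ^ n * ((4 / (1 - q) ^ 2) ^ n * (2 * laurentBound Λ ^ n))) *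
          (4 / (1 - q) ^ 2) ^ n := by
        have hX : 0 ≤ laurentBound X := zero_le_one.trans (one_le_laurentBound X)
        have hΛ : 0 ≤ laurentBound Λ := zero_le_one.trans (one_le_laurentBound Λ)
        rw [hQ]
        gcongr
        exacts [norm_pow_mul_RogersA1_div_le hq0 hq1 hs hs0 hs1 X n,
          norm_RogersA1_le hq0 hq1 hs Λ n, norm_sphWeightA1_le hq0 hq1 hs n]
    _ = _ := by simp only [mul_pow]; ring

theorem summable_rpow_sq_div_four_mul_pow {q : ℝ} (hq0 : 0 ≤ q) (hq1 : q < 1) (A : ℝ) :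
    Summable fun n : ℕ => q ^ ((n : ℝ) ^ 2 / 4) * A ^ n := by
  set r := q ^ (1 / 4 : ℝ)
  have hr (n : ℕ) : q ^ ((n : ℝ) ^ 2 / 4) * A ^ n = (r ^ n * A) ^ n := by
    rw [mul_pow, ← pow_mul, ← Real.rpow_natCast r, ← Real.rpow_mul hq0]
    push_cast
    ring_nf
  have hlim : Tendsto (fun n : ℕ => r ^ n * A) atTop (𝓝 0) := by
    simpa using (tendsto_pow_atTop_nhds_zero_of_lt_one (Real.rpow_nonneg hq0 _)
      (Real.rpow_lt_one hq0 hq1 (by norm_num))).mul_const A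
  refine summable_geometric_two.of_norm_bounded_eventually_nat ?_
  filter_upwards [hlim.norm.eventually (ge_mem_nhds (by norm_num : ‖(0 : ℝ)‖ < 1 / 2))] with n hn
  rw [hr, norm_pow]
  exact pow_le_pow_left₀ (norm_nonneg _) hn n

theorem tendsto_tsum_sphTermA1 {q : ℝ} (hq0 : 0 < q) (hq1 : q < 1) (X Λ : ℂ) :
    Tendsto (fun s => ∑' n, sphTermA1 q s (X / s) Λ n) (𝓝[≠] 0) (𝓝 (whitA1 q X Λ)) := by
  have hsmall : ∀ᶠ s : ℂ in 𝓝[≠] 0, s ≠ 0 ∧ ‖s ^ 2‖ ≤ q := by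
    have : ∀ᶠ s : ℂ in 𝓝 0, ‖s ^ 2‖ < q :=
      ((by fun_prop : Continuous fun s : ℂ => ‖s ^ 2‖).tendsto' 0 0 (by simp)).eventually
        (gt_mem_nhds hq0)
    filter_upwards [self_mem_nhdsWithin, nhdsWithin_le_nhds this] with s hs hsq
    exact ⟨hs, hsq.le⟩
  set K := 4 / (1 - q) ^ 2
  refine tendsto_tsum_of_dominated_convergence
    ((summable_rpow_sq_div_four_mul_pow hq0.le hq1 (2 * K * laurentBound X *
      (2 * K * laurentBound Λ) * K)).mul_left 4) (tendsto_sphTermA1 hq0.le hq1 X Λ) ?_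
  filter_upwards [hsmall] with s hs n using norm_sphTermA1_le hq0.le hq1 hs.1 hs.2 X Λ n

theorem sphA1_whittaker_limit_general (q : ℝ) (hq0 : 0 < q) (hq1 : q < 1)
    (X Λ : ℂ) :
    Filter.Tendsto (fun s : ℝ => sphA1 q s (X / (s : ℂ)) Λ)
      (nhdsWithin 0 (Set.Ioo 0 1)) (nhds (whitA1 q X Λ)) := by
  have hcast : Tendsto (fun s : ℝ => (s : ℂ)) (𝓝[Set.Ioo 0 1] 0) (𝓝[≠] 0) := by
    refine tendsto_nhdsWithin_of_tendsto_nhds_of_eventually_within _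
      ((Complex.continuous_ofReal.tendsto' 0 0 (by simp)).mono_left nhdsWithin_le_nhds) ?_
    filter_upwards [self_mem_nhdsWithin] with s hs
    simpa using hs.1.ne'
  simp only [sphA1_eq_tsum_sphTermA1]
  exact (tendsto_tsum_sphTermA1 hq0 hq1 X Λ).comp hcast

/-- the Whittaker limit of the global q,t-spherical function of type A₁. -/
theorem sphA1_whittaker_limit (q : ℝ) (hq0 : 0 < q) (hq1 : q < 1)
    (X Λ : ℂ) (hX : X ≠ 0) (hΛ : Λ ≠ 0) :
    Filter.Tendsto (fun s : ℝ => sphA1 q s (X / (s : ℂ)) Λ)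
      (nhdsWithin 0 (Set.Ioo 0 1)) (nhds (whitA1 q X Λ)) :=
  sphA1_whittaker_limit_general q hq0 hq1 X Λ

end
end

section
/- Fix a real number q with 0 < q < 1 and a complex number t with |t| < 1. For every X ∈ ℂ with |X| > 1, the Rogers polynomials of type A₁ satisfy the pointwise Harish-Chandra-type asymptotics lim_{n → ∞} X^{−n} · P_n(X; q, t) = ∏_{j=0}^∞ (1 − t X^{−2} qʲ)/(1 − X^{−2} qʲ). (Lemma 4.4 of the paper in the rank-one case.) -/
open scoped BigOperators
open Filter

noncomputable section

/-! Put `z = X⁻¹ ^ 2`. For `2j < n` one has `X⁻¹ ^ n * M_{n-2j}(X) = z ^ j + z ^ (n - j)`, so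
`X⁻¹ ^ n * P_n(X) = ∑_{2j ≤ n} c_{n,j} (z ^ j + z ^ (n - j))` (a single `z ^ j` when `2j = n`),
where the coefficients `c_{n,j}` tend to `(t;q)_j / (q;q)_j` as `n → ∞` and are bounded uniformly
in `n` and `j` (bound each factor by an exponential and sum geometric series in the exponent).
Tannery's theorem gives the limit `F(z) = ∑_j (t;q)_j / (q;q)_j z ^ j`, and the `q`-binomial
theorem identifies `F(z)` with the infinite product: the coefficient recursion gives
`(1 - z) F(z) = (1 - t z) F(q z)`; iterating, `F(z) = ∏_{j<N} (1 - t z q^j)/(1 - z q^j) · F(q^N z)`,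
and `F(q^N z) → F(0) = 1`. -/

open Finset Topology

lemma one_sub_ne_zero_of_norm_lt_one {w : ℂ} (hw : ‖w‖ < 1) : 1 - w ≠ 0 :=
  sub_ne_zero.2 fun h => by simp [← h] at hw

lemma norm_inv_one_sub_le {w : ℂ} (hw : ‖w‖ < 1) : ‖(1 - w)⁻¹‖ ≤ (1 - ‖w‖)⁻¹ := by
  rw [norm_inv]
  exact inv_anti₀ (by linarith) (by simpa using norm_sub_norm_le 1 w)

lemma norm_one_sub_le_exp (w : ℂ) : ‖1 - w‖ ≤ Real.exp ‖w‖ :=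
  (norm_sub_le _ _).trans (by simpa [add_comm] using Real.add_one_le_exp ‖w‖)

lemma norm_inv_one_sub_le_exp {w : ℂ} {s : ℝ} (hw : ‖w‖ ≤ s) (hs : s < 1) :
    ‖(1 - w)⁻¹‖ ≤ Real.exp (‖w‖ / (1 - s)) := by
  have hw1 : 0 < 1 - ‖w‖ := by linarith
  calc ‖(1 - w)⁻¹‖ ≤ (1 - ‖w‖)⁻¹ := norm_inv_one_sub_le (by linarith)
    _ = 1 + ‖w‖ / (1 - ‖w‖) := by field_simp; ring
    _ ≤ 1 + ‖w‖ / (1 - s) := by gcongr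
    _ ≤ Real.exp (‖w‖ / (1 - s)) := by linarith [Real.add_one_le_exp (‖w‖ / (1 - s))]

lemma norm_one_sub_mul_div_le_exp (a b : ℂ) {c d : ℂ} {s : ℝ} (hs : s < 1)
    (hc : ‖c‖ ≤ s) (hd : ‖d‖ ≤ s) :
    ‖(1 - a) * (1 - b) / ((1 - c) * (1 - d))‖ ≤
      Real.exp ((‖a‖ + ‖b‖ + ‖c‖ + ‖d‖) / (1 - s)) := by
  have hs0 : 0 < 1 - s := by linarith
  have hs1 : 1 - s ≤ 1 := by linarith [(norm_nonneg c).trans hc]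
  have hexp (w : ℂ) : ‖1 - w‖ ≤ Real.exp (‖w‖ / (1 - s)) :=
    (norm_one_sub_le_exp w).trans (Real.exp_le_exp.2 (le_div_self (norm_nonneg w) hs0 hs1))
  rw [div_eq_mul_inv, mul_inv, norm_mul, norm_mul, norm_mul, add_div, add_div, add_div,
    Real.exp_add, Real.exp_add, Real.exp_add, ← mul_assoc]
  gcongr
  exacts [hexp a, hexp b, norm_inv_one_sub_le_exp hc hs, norm_inv_one_sub_le_exp hd hs]

lemma sum_pow_le_of_injOn {r : ℝ} (hr0 : 0 ≤ r) (hr1 : r < 1) {s : Finset ℕ} {e : ℕ → ℕ}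
    (he : Set.InjOn e s) : ∑ i ∈ s, r ^ e i ≤ (1 - r)⁻¹ := by
  classical
  rw [← Finset.sum_image (f := (r ^ ·)) he, ← tsum_geometric_of_lt_one hr0 hr1]
  exact (summable_geometric_of_lt_one hr0 hr1).sum_le_tsum _ fun _ _ => by positivity

lemma norm_pow_mul_le {q : ℂ} (hq : ‖q‖ ≤ 1) (N : ℕ) (z : ℂ) : ‖q ^ N * z‖ ≤ ‖z‖ := by
  rw [norm_mul, norm_pow]
  exact mul_le_of_le_one_left (norm_nonneg z) (pow_le_one₀ (norm_nonneg q) hq)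

/-- `(t; q)_j / (q; q)_j`. -/
def qBinomCoeff (q t : ℂ) (j : ℕ) : ℂ :=
  ∏ i ∈ range j, (1 - t * q ^ i) / (1 - q ^ (1 + i))

def rogersCoeff (q t : ℂ) (n j : ℕ) : ℂ :=
  ∏ i ∈ range j, ((1 - q ^ (n - i)) * (1 - t * q ^ i)) /
    ((1 - q ^ (1 + i)) * (1 - t * q ^ (n - i - 1)))

def rogersCoeffBound (q t : ℂ) : ℝ :=
  Real.exp (4 / ((1 - ‖q‖) * (1 - max ‖q‖ ‖t‖)))

lemma rogersCoeffBound_nonneg (q t : ℂ) : 0 ≤ rogersCoeffBound q t :=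
  (Real.exp_pos _).le

section Coefficients

variable {q t : ℂ}

lemma one_sub_pow_succ_ne_zero (hq : ‖q‖ < 1) (i : ℕ) : 1 - q ^ (1 + i) ≠ 0 := by
  refine one_sub_ne_zero_of_norm_lt_one ?_
  rw [norm_pow]
  exact pow_lt_one₀ (norm_nonneg q) hq (by omega)

lemma tendsto_rogersCoeff (hq : ‖q‖ < 1) (j : ℕ) :
    Tendsto (fun n => rogersCoeff q t n j) atTop (𝓝 (qBinomCoeff q t j)) := by
  have hpow : Tendsto (q ^ ·) atTop (𝓝 0) := tendsto_pow_atTop_nhds_zero_of_norm_lt_one hq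
  refine tendsto_finsetProd _ fun i _ => ?_
  have h₁ := hpow.comp (tendsto_sub_atTop_nat i)
  have h₂ := hpow.comp ((tendsto_sub_atTop_nat 1).comp (tendsto_sub_atTop_nat i))
  have := (((tendsto_const_nhds (x := 1)).sub h₁).mul
    (tendsto_const_nhds (x := 1 - t * q ^ i))).div
    ((tendsto_const_nhds (x := 1 - q ^ (1 + i))).mul ((tendsto_const_nhds (x := 1)).sub
      (h₂.const_mul t)))
    (mul_ne_zero (one_sub_pow_succ_ne_zero hq i) (by simp : (1 : ℂ) - t * 0 ≠ 0))
  convert this using 2 <;> simp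

lemma norm_rogersCoeff_le (hq : ‖q‖ < 1) (ht : ‖t‖ < 1) {n j : ℕ} (hjn : j ≤ n) :
    ‖rogersCoeff q t n j‖ ≤ rogersCoeffBound q t := by
  set r := ‖q‖
  set s := max r ‖t‖
  have hs : s < 1 := max_lt hq ht
  have hpow_le {m : ℕ} (hm : m ≠ 0) : ‖q ^ m‖ ≤ s := by
    rw [norm_pow]
    exact (pow_le_of_le_one (norm_nonneg q) hq.le hm).trans (le_max_left _ _)
  have ht_le (m : ℕ) : ‖t * q ^ m‖ ≤ s := by
    rw [norm_mul, norm_pow]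
    exact (mul_le_of_le_one_right (norm_nonneg t) (pow_le_one₀ (norm_nonneg q) hq.le)).trans
      (le_max_right _ _)
  have ht_le_pow (m : ℕ) : ‖t * q ^ m‖ ≤ r ^ m := by
    rw [norm_mul, norm_pow]
    exact mul_le_of_le_one_left (by positivity) ht.le
  have hsum {e : ℕ → ℕ} (he : Set.InjOn e (range j)) : ∑ i ∈ range j, r ^ e i ≤ (1 - r)⁻¹ :=
    sum_pow_le_of_injOn (norm_nonneg q) hq he
  rw [rogersCoeff, norm_prod]
  calc ∏ i ∈ range j, ‖(1 - q ^ (n - i)) * (1 - t * q ^ i) /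
        ((1 - q ^ (1 + i)) * (1 - t * q ^ (n - i - 1)))‖
      ≤ ∏ i ∈ range j,
          Real.exp ((r ^ (n - i) + r ^ i + r ^ (1 + i) + r ^ (n - i - 1)) / (1 - s)) := by
        refine prod_le_prod (fun _ _ => norm_nonneg _) fun i _ => ?_
        refine (norm_one_sub_mul_div_le_exp _ _ hs (hpow_le (by omega)) (ht_le _)).trans ?_
        gcongr
        all_goals first | exact norm_pow_le _ _ | exact ht_le_pow _
    _ = Real.exp ((∑ i ∈ range j, r ^ (n - i) + ∑ i ∈ range j, r ^ i +
          ∑ i ∈ range j, r ^ (1 + i) + ∑ i ∈ range j, r ^ (n - i - 1)) / (1 - s)) := by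
        rw [← Real.exp_sum, ← sum_div, sum_add_distrib, sum_add_distrib, sum_add_distrib]
    _ ≤ rogersCoeffBound q t := by
        have h₁ := hsum (e := (n - ·)) fun a ha b hb h => by simp at ha hb h; omega
        have h₂ := hsum (e := id) (Set.injOn_id _)
        have h₃ := hsum (e := (1 + ·)) fun a _ b _ h => by simp at h; omega
        have h₄ := hsum (e := (n - · - 1)) fun a ha b hb h => by simp at ha hb h; omega
        simp only [id] at h₂
        rw [rogersCoeffBound, Real.exp_le_exp, ← div_div]
        gcongr
        rw [div_eq_mul_inv]
        linarith

lemma norm_qBinomCoeff_le (hq : ‖q‖ < 1) (ht : ‖t‖ < 1) (j : ℕ) :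
    ‖qBinomCoeff q t j‖ ≤ rogersCoeffBound q t :=
  le_of_tendsto (tendsto_rogersCoeff hq j).norm
    (eventually_atTop.2 ⟨j, fun _ hn => norm_rogersCoeff_le hq ht hn⟩)

lemma qBinomCoeff_succ_mul (hq : ‖q‖ < 1) (j : ℕ) :
    qBinomCoeff q t (j + 1) * (1 - q ^ (1 + j)) = qBinomCoeff q t j * (1 - t * q ^ j) := by
  rw [qBinomCoeff, prod_range_succ, ← qBinomCoeff,
    mul_assoc, div_mul_cancel₀ _ (one_sub_pow_succ_ne_zero hq j)]

end Coefficients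

def qBinomSeries (q t w : ℂ) : ℂ :=
  ∑' j, qBinomCoeff q t j * w ^ j

section QBinomial

variable {q t z : ℂ}

lemma summable_qBinomCoeff_mul_pow (hq : ‖q‖ < 1) (ht : ‖t‖ < 1) {w : ℂ} (hw : ‖w‖ < 1) :
    Summable fun j => qBinomCoeff q t j * w ^ j := by
  refine .of_norm_bounded
    ((summable_geometric_of_lt_one (norm_nonneg w) hw).mul_left (rogersCoeffBound q t)) fun j => ?_
  rw [norm_mul, norm_pow]
  gcongr
  exact norm_qBinomCoeff_le hq ht j

lemma one_sub_mul_qBinomSeries (hq : ‖q‖ < 1) (ht : ‖t‖ < 1) {w : ℂ} (hw : ‖w‖ < 1) :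
    (1 - w) * qBinomSeries q t w = (1 - t * w) * qBinomSeries q t (q * w) := by
  have S₁ := summable_qBinomCoeff_mul_pow hq ht hw
  have S₂ := summable_qBinomCoeff_mul_pow hq ht
    ((by simpa using norm_pow_mul_le hq.le 1 w : ‖q * w‖ ≤ ‖w‖).trans_lt hw)
  have hshift (j : ℕ) : qBinomCoeff q t (j + 1) * w ^ (j + 1) -
      qBinomCoeff q t (j + 1) * (q * w) ^ (j + 1) =
      w * (qBinomCoeff q t j * w ^ j) - t * w * (qBinomCoeff q t j * (q * w) ^ j) := by
    linear_combination w ^ (j + 1) * qBinomCoeff_succ_mul (t := t) hq j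
  have hdiff : qBinomSeries q t w - qBinomSeries q t (q * w) =
      w * qBinomSeries q t w - t * w * qBinomSeries q t (q * w) := by
    rw [qBinomSeries, qBinomSeries, ← S₁.tsum_sub S₂, (S₁.sub S₂).tsum_eq_zero_add,
      tsum_congr hshift, (S₁.mul_left w).tsum_sub (S₂.mul_left (t * w)), tsum_mul_left,
      tsum_mul_left]
    simp
  linear_combination hdiff

lemma qBinomSeries_eq_prod_mul (hq : ‖q‖ < 1) (ht : ‖t‖ < 1) (hz : ‖z‖ < 1) (N : ℕ) :
    qBinomSeries q t z = (∏ j ∈ range N, (1 - t * z * q ^ j) / (1 - z * q ^ j)) *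
      qBinomSeries q t (q ^ N * z) := by
  induction N with
  | zero => simp
  | succ N ih =>
    have hw : ‖q ^ N * z‖ < 1 := (norm_pow_mul_le hq.le N z).trans_lt hz
    have hne : 1 - z * q ^ N ≠ 0 := by
      rw [mul_comm]; exact one_sub_ne_zero_of_norm_lt_one hw
    have hfun := one_sub_mul_qBinomSeries hq ht hw
    rw [← mul_assoc q, ← pow_succ'] at hfun
    rw [ih, prod_range_succ, mul_assoc, div_mul_eq_mul_div]
    congr 1
    rw [eq_div_iff hne]
    linear_combination hfun

lemma tendsto_qBinomSeries_pow_mul (hq : ‖q‖ < 1) (ht : ‖t‖ < 1) (hz : ‖z‖ < 1) :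
    Tendsto (fun N => qBinomSeries q t (q ^ N * z)) atTop (𝓝 1) := by
  have hpow : Tendsto (fun N => q ^ N * z) atTop (𝓝 0) := by
    simpa using (tendsto_pow_atTop_nhds_zero_of_norm_lt_one hq).mul_const z
  have hlim := tendsto_tsum_of_dominated_convergence
    ((summable_geometric_of_lt_one (norm_nonneg z) hz).mul_left (rogersCoeffBound q t))
    (fun j => (hpow.pow j).const_mul (qBinomCoeff q t j))
    (.of_forall fun N j => by
      rw [norm_mul, norm_pow]
      exact mul_le_mul (norm_qBinomCoeff_le hq ht j) (pow_le_pow_left₀ (norm_nonneg _)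
        (norm_pow_mul_le hq.le N z) j) (by positivity) (rogersCoeffBound_nonneg q t))
  rwa [tsum_eq_single 0 fun j hj => by simp [hj], pow_zero, mul_one, qBinomCoeff,
    prod_range_zero] at hlim

lemma multipliable_qBinom (hq : ‖q‖ < 1) (hz : ‖z‖ < 1) (t : ℂ) :
    Multipliable fun j => (1 - t * z * q ^ j) / (1 - z * q ^ j) := by
  have hw (j : ℕ) : ‖z * q ^ j‖ < 1 := by
    rw [mul_comm]; exact (norm_pow_mul_le hq.le j z).trans_lt hz
  have hne (j : ℕ) : 1 - z * q ^ j ≠ 0 := one_sub_ne_zero_of_norm_lt_one (hw j)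
  have hsum : Summable fun j => (1 - t) * z * q ^ j / (1 - z * q ^ j) := by
    refine .of_norm_bounded ((summable_geometric_of_lt_one (norm_nonneg q) hq).mul_left
      (‖(1 - t) * z‖ * (1 - ‖z‖)⁻¹)) fun j => ?_
    have hinv : ‖(1 - z * q ^ j)⁻¹‖ ≤ (1 - ‖z‖)⁻¹ := by
      refine (norm_inv_one_sub_le (hw j)).trans ?_
      gcongr
      rw [mul_comm]
      exact norm_pow_mul_le hq.le j z
    rw [norm_div, norm_mul _ (q ^ j), norm_pow, div_eq_mul_inv, ← norm_inv,
      mul_right_comm _ (1 - ‖z‖)⁻¹]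
    gcongr
  convert Complex.multipliable_one_add_of_summable hsum using 2 with j
  field_simp [hne j]
  ring

theorem qBinomSeries_eq_tprod (hq : ‖q‖ < 1) (ht : ‖t‖ < 1) (hz : ‖z‖ < 1) :
    qBinomSeries q t z = ∏' j, (1 - t * z * q ^ j) / (1 - z * q ^ j) := by
  have hlim := (multipliable_qBinom hq hz t).hasProd.tendsto_prod_nat.mul
    (tendsto_qBinomSeries_pow_mul hq ht hz)
  rw [mul_one] at hlim
  exact tendsto_nhds_unique
    (tendsto_const_nhds.congr (qBinomSeries_eq_prod_mul hq ht hz)) hlim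

end QBinomial

section Rogers

variable {X : ℂ} {n j : ℕ}

lemma inv_pow_mul_Msym (hX : X ≠ 0) (h : 2 * j < n) :
    X⁻¹ ^ n * Msym (n - 2 * j) X = (X⁻¹ ^ 2) ^ j + (X⁻¹ ^ 2) ^ (n - j) := by
  obtain ⟨m, rfl⟩ : ∃ m, n = 2 * j + m + 1 := ⟨n - 2 * j - 1, by omega⟩
  rw [Msym, if_neg (by omega), show 2 * j + m + 1 - 2 * j = m + 1 by omega,
    show 2 * j + m + 1 - j = j + m + 1 by omega]
  simp only [inv_pow, ← pow_mul]
  field_simp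
  ring

lemma norm_inv_sq_lt_one (hX : 1 < ‖X‖) : ‖X⁻¹ ^ 2‖ < 1 := by
  rw [norm_pow, norm_inv]
  exact pow_lt_one₀ (by positivity) (inv_lt_one_of_one_lt₀ hX) two_ne_zero

lemma norm_inv_pow_mul_Msym_le (hX : 1 ≤ ‖X‖) (h : 2 * j ≤ n) :
    ‖X⁻¹ ^ n * Msym (n - 2 * j) X‖ ≤ 2 * ‖X⁻¹ ^ 2‖ ^ j := by
  have hz : ‖X⁻¹ ^ 2‖ ≤ 1 := by
    rw [norm_pow, norm_inv]; exact pow_le_one₀ (by positivity) (inv_le_one_of_one_le₀ hX)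
  rcases h.eq_or_lt with rfl | hlt
  · rw [Nat.sub_self, Msym, if_pos rfl, mul_one, pow_mul, norm_pow]
    linarith [pow_nonneg (norm_nonneg (X⁻¹ ^ 2)) j]
  · rw [inv_pow_mul_Msym (norm_pos_iff.1 (by linarith)) hlt, two_mul]
    refine (norm_add_le _ _).trans (add_le_add (norm_pow _ _).le ?_)
    rw [norm_pow]
    exact pow_le_pow_of_le_one (norm_nonneg _) hz (by omega)

lemma tendsto_inv_pow_mul_Msym (hX : 1 < ‖X‖) (j : ℕ) :
    Tendsto (fun n => X⁻¹ ^ n * Msym (n - 2 * j) X) atTop (𝓝 ((X⁻¹ ^ 2) ^ j)) := by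
  have hz := norm_inv_sq_lt_one hX
  have hlim := (tendsto_const_nhds (x := (X⁻¹ ^ 2) ^ j)).add
    ((tendsto_pow_atTop_nhds_zero_of_norm_lt_one hz).comp (tendsto_sub_atTop_nat j))
  rw [add_zero] at hlim
  refine hlim.congr' ((eventually_gt_atTop (2 * j)).mono fun n hn => ?_)
  exact (inv_pow_mul_Msym (norm_pos_iff.1 (by linarith)) hn).symm

def rogersTerm (q t X : ℂ) (n j : ℕ) : ℂ :=
  if 2 * j ≤ n then rogersCoeff q t n j * (X⁻¹ ^ n * Msym (n - 2 * j) X) else 0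

lemma tsum_rogersTerm (q : ℝ) (t X : ℂ) (n : ℕ) :
    ∑' j, rogersTerm q t X n j = X⁻¹ ^ n * RogersA1 q t n X := by
  rw [tsum_eq_sum (s := range (n / 2 + 1)) fun j hj => by
    rw [rogersTerm, if_neg (by simp at hj; omega)]]
  rw [sum_range_succ', RogersA1, range_eq_Ico, sum_Ico_add', zero_add, Ico_add_one_right_eq_Icc,
    mul_add, mul_sum, add_comm]
  congr 1
  · simp [rogersTerm, rogersCoeff]
  · refine sum_congr rfl fun j hj => ?_
    rw [rogersTerm, if_pos (by simp at hj; omega), rogersCoeff]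
    ring

theorem tendsto_inv_pow_mul_RogersA1 {q : ℝ} {t : ℂ} (hq : ‖(q : ℂ)‖ < 1) (ht : ‖t‖ < 1)
    (hX : 1 < ‖X‖) :
    Tendsto (fun n => X⁻¹ ^ n * RogersA1 q t n X) atTop (𝓝 (qBinomSeries q t (X⁻¹ ^ 2))) := by
  have hz := norm_inv_sq_lt_one hX
  simp_rw [← tsum_rogersTerm]
  refine tendsto_tsum_of_dominated_convergence
    ((summable_geometric_of_lt_one (norm_nonneg _) hz).mul_left (rogersCoeffBound q t * 2))
    (fun j => ?_) (.of_forall fun n j => ?_)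
  · exact ((tendsto_rogersCoeff hq j).mul (tendsto_inv_pow_mul_Msym hX j)).congr'
      ((eventually_ge_atTop (2 * j)).mono fun n hn => (if_pos hn).symm)
  · rw [rogersTerm]
    split_ifs with h
    · rw [norm_mul, mul_assoc]
      exact mul_le_mul (norm_rogersCoeff_le hq ht (by omega)) (norm_inv_pow_mul_Msym_le hX.le h)
        (norm_nonneg _) (rogersCoeffBound_nonneg _ t)
    · rw [norm_zero]
      exact mul_nonneg (mul_nonneg (rogersCoeffBound_nonneg _ t) zero_le_two) (by positivity)

end Rogers

/-- Harish-Chandra-type pointwise asymptotics of the Rogers polynomials. -/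
theorem rogersA1_asymptotics (q : ℝ) (hq0 : 0 < q) (hq1 : q < 1)
    (t : ℂ) (ht : ‖t‖ < 1) (X : ℂ) (hX : 1 < ‖X‖) :
    Filter.Tendsto (fun n : ℕ => X⁻¹ ^ n * RogersA1 q t n X) Filter.atTop
      (nhds (∏' j : ℕ, (1 - t * X⁻¹ ^ 2 * (q : ℂ) ^ j) / (1 - X⁻¹ ^ 2 * (q : ℂ) ^ j))) := by
  have hq : ‖(q : ℂ)‖ < 1 := by
    rw [Complex.norm_real, Real.norm_eq_abs, abs_lt]; constructor <;> linarith
  rw [← qBinomSeries_eq_tprod hq ht (norm_inv_sq_lt_one hX)]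
  exact tendsto_inv_pow_mul_RogersA1 hq ht hX

end
end

section
/- Fix real numbers q and s with 0 < q < 1 and 0 < s < 1 and set t = s². For every Λ ∈ ℂ with 0 < |Λ| < 1, the normalized (spherical) Rogers polynomials of type A₁ satisfy the Harish-Chandra-type asymptotics lim_{n → ∞} (Λ/s)ⁿ · P_n(Λ; q, t) / P_n(s; q, t) = ∏_{j=0}^∞ ((1 − t Λ² qʲ)(1 − t qʲ)) / ((1 − Λ² qʲ)(1 − t² qʲ)). (The content of Theorem 4.2(i) of the paper, formula (4.69), in the rank-one case.) -/
/-!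
For `‖X‖ < 1` the `j`-th term of `X ^ n P_n(X)` is `c_{n,j} (X ^ {2j} + X ^ {2n-2j})`, where the
coefficients `c_{n,j}` stay bounded and tend to `(t; q)_j / (q; q)_j` as `n → ∞`. By dominated
convergence `X ^ n P_n(X)` tends to the `q`-binomial series
`S(X²) = ∑_j (t; q)_j / (q; q)_j X^{2j}`. The `q`-binomial theorem `S(z) = (tz; q)_∞ / (z; q)_∞`
follows by iterating the functional equation `(1 - z) S(z) = (1 - t z) S(q z)` and letting
`S(q ^ m z) → S(0) = 1`. Taking `X = Λ` and `X = s` and dividing gives the product, since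
`S(t) ≥ 1` does not vanish.
-/

open scoped BigOperators
open Filter

noncomputable section

open Filter Topology Finset

namespace RogersA1

/-- `(t; q)_j / (q; q)_j`, the coefficient of `z ^ j` in the `q`-binomial series. -/
def qBinomCoeff (q t : ℝ) (j : ℕ) : ℝ :=
  ∏ i ∈ range j, (1 - t * q ^ i) / (1 - q ^ (i + 1))

def rogersCoeff (q t : ℝ) (n j : ℕ) : ℝ :=
  ∏ i ∈ range j,
    ((1 - q ^ (n - i)) * (1 - t * q ^ i)) / ((1 - q ^ (1 + i)) * (1 - t * q ^ (n - i - 1)))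

def qBinomialSeries (q t : ℝ) (z : ℂ) : ℂ :=
  ∑' j, (qBinomCoeff q t j : ℂ) * z ^ j

variable {q t : ℝ}

lemma one_sub_pow_succ_pos (hq0 : 0 ≤ q) (hq1 : q < 1) (i : ℕ) : 0 < 1 - q ^ (i + 1) :=
  sub_pos.2 (pow_lt_one₀ hq0 hq1 i.succ_ne_zero)

lemma one_sub_mul_pow_pos (hq0 : 0 ≤ q) (hq1 : q ≤ 1) (ht0 : 0 ≤ t) (ht1 : t < 1) (i : ℕ) :
    0 < 1 - t * q ^ i :=
  sub_pos.2 ((mul_le_of_le_one_right ht0 (pow_le_one₀ hq0 hq1)).trans_lt ht1)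

lemma norm_ofReal_pow_mul_le (hq0 : 0 ≤ q) (hq1 : q ≤ 1) (i : ℕ) (z : ℂ) :
    ‖(q : ℂ) ^ i * z‖ ≤ ‖z‖ := by
  rw [norm_mul, norm_pow, Complex.norm_real, Real.norm_of_nonneg hq0]
  exact mul_le_of_le_one_left (norm_nonneg z) (pow_le_one₀ hq0 hq1)

lemma one_sub_ne_zero_of_norm_lt_one {R : Type*} [NormedRing R] [NormOneClass R] {w : R}
    (hw : ‖w‖ < 1) : 1 - w ≠ 0 := by
  rw [sub_ne_zero]
  rintro rfl
  simp at hw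

lemma inv_one_sub_le_exp {x : ℝ} (hx1 : x < 1) : (1 - x)⁻¹ ≤ Real.exp (x / (1 - x)) := by
  have hx : 1 - x ≠ 0 := (sub_pos.2 hx1).ne'
  calc (1 - x)⁻¹ = x / (1 - x) + 1 := by field_simp; ring
    _ ≤ Real.exp (x / (1 - x)) := Real.add_one_le_exp _

lemma prod_inv_one_sub_pow_succ_le (hq0 : 0 ≤ q) (hq1 : q < 1) (j : ℕ) :
    ∏ i ∈ range j, (1 - q ^ (i + 1))⁻¹ ≤ Real.exp (q / (1 - q) ^ 2) := by
  have hq : 0 < 1 - q := sub_pos.2 hq1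
  calc ∏ i ∈ range j, (1 - q ^ (i + 1))⁻¹
      ≤ ∏ i ∈ range j, Real.exp (q ^ (i + 1) / (1 - q)) := by
        refine prod_le_prod (fun i _ => (inv_pos.2 (one_sub_pow_succ_pos hq0 hq1 i)).le)
          fun i _ => (inv_one_sub_le_exp (pow_lt_one₀ hq0 hq1 i.succ_ne_zero)).trans ?_
        gcongr
        exact pow_le_of_le_one hq0 hq1.le i.succ_ne_zero
    _ = Real.exp ((∑ i ∈ range j, q ^ i) * (q / (1 - q))) := by
        rw [← Real.exp_sum, sum_mul]
        refine congrArg Real.exp (sum_congr rfl fun i _ => ?_)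
        rw [pow_succ]
        ring
    _ ≤ Real.exp ((1 - q)⁻¹ * (q / (1 - q))) := by
        gcongr
        have := geom_sum_Ico_le_of_lt_one (m := 0) (n := j) hq0 hq1
        rwa [← range_eq_Ico, pow_zero, one_div] at this
    _ = Real.exp (q / (1 - q) ^ 2) := by
        congr 1
        field_simp

lemma qBinomCoeff_pos (hq0 : 0 ≤ q) (hq1 : q < 1) (ht0 : 0 ≤ t) (ht1 : t < 1) (j : ℕ) :
    0 < qBinomCoeff q t j :=
  prod_pos fun i _ =>
    div_pos (one_sub_mul_pow_pos hq0 hq1.le ht0 ht1 i) (one_sub_pow_succ_pos hq0 hq1 i)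

lemma qBinomCoeff_le (hq0 : 0 ≤ q) (hq1 : q < 1) (ht0 : 0 ≤ t) (ht1 : t < 1) (j : ℕ) :
    qBinomCoeff q t j ≤ Real.exp (q / (1 - q) ^ 2) := by
  refine (prod_le_prod (fun i _ => ?_) fun i _ => ?_).trans
    (prod_inv_one_sub_pow_succ_le hq0 hq1 j)
  · exact (div_pos (one_sub_mul_pow_pos hq0 hq1.le ht0 ht1 i) (one_sub_pow_succ_pos hq0 hq1 i)).le
  · rw [div_eq_mul_inv]
    refine mul_le_of_le_one_left (inv_pos.2 (one_sub_pow_succ_pos hq0 hq1 i)).le ?_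
    linarith [mul_nonneg ht0 (pow_nonneg hq0 i)]

lemma qBinomCoeff_zero : qBinomCoeff q t 0 = 1 := prod_range_zero _

lemma qBinomCoeff_succ_mul (hq0 : 0 ≤ q) (hq1 : q < 1) (j : ℕ) :
    qBinomCoeff q t (j + 1) * (1 - q ^ (j + 1)) = qBinomCoeff q t j * (1 - t * q ^ j) := by
  rw [qBinomCoeff, prod_range_succ, ← qBinomCoeff, mul_assoc,
    div_mul_cancel₀ _ (one_sub_pow_succ_pos hq0 hq1 j).ne']

lemma rogersCoeff_factor_nonneg_and_le (hq0 : 0 ≤ q) (hq1 : q < 1) (ht0 : 0 ≤ t) (ht1 : t < 1)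
    {n i : ℕ} (hi : 2 * i < n) :
    0 ≤ ((1 - q ^ (n - i)) * (1 - t * q ^ i)) / ((1 - q ^ (1 + i)) * (1 - t * q ^ (n - i - 1))) ∧
    ((1 - q ^ (n - i)) * (1 - t * q ^ i)) / ((1 - q ^ (1 + i)) * (1 - t * q ^ (n - i - 1)))
      ≤ (1 - q ^ (i + 1))⁻¹ := by
  have hqi := one_sub_pow_succ_pos hq0 hq1 i
  have hti := one_sub_mul_pow_pos hq0 hq1.le ht0 ht1 i
  have htn := one_sub_mul_pow_pos hq0 hq1.le ht0 ht1 (n - i - 1)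
  have hqn : 0 ≤ 1 - q ^ (n - i) := sub_nonneg.2 (pow_le_one₀ hq0 hq1.le)
  have hnum : (1 - q ^ (n - i)) * (1 - t * q ^ i) ≤ 1 - t * q ^ (n - i - 1) := by
    have hpow : q ^ (n - i - 1) ≤ q ^ i := pow_le_pow_of_le_one hq0 hq1.le (by omega)
    nlinarith [pow_nonneg hq0 (n - i)]
  rw [add_comm 1 i]
  refine ⟨by positivity, ?_⟩
  calc _ ≤ (1 - t * q ^ (n - i - 1)) / ((1 - q ^ (i + 1)) * (1 - t * q ^ (n - i - 1))) := by
        gcongr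
    _ = (1 - q ^ (i + 1))⁻¹ := by field_simp

lemma abs_rogersCoeff_le (hq0 : 0 ≤ q) (hq1 : q < 1) (ht0 : 0 ≤ t) (ht1 : t < 1) {n j : ℕ}
    (hj : 2 * j ≤ n) : |rogersCoeff q t n j| ≤ Real.exp (q / (1 - q) ^ 2) := by
  have hfactor (i : ℕ) (hi : i ∈ range j) :=
    rogersCoeff_factor_nonneg_and_le hq0 hq1 ht0 ht1 (n := n) (i := i)
      (by rw [mem_range] at hi; omega)
  rw [rogersCoeff, abs_of_nonneg (prod_nonneg fun i hi => (hfactor i hi).1)]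
  exact (prod_le_prod (fun i hi => (hfactor i hi).1) fun i hi => (hfactor i hi).2).trans
    (prod_inv_one_sub_pow_succ_le hq0 hq1 j)

lemma tendsto_rogersCoeff (hq0 : 0 ≤ q) (hq1 : q < 1) (j : ℕ) :
    Tendsto (fun n => rogersCoeff q t n j) atTop (𝓝 (qBinomCoeff q t j)) := by
  refine tendsto_finsetProd _ fun i _ => ?_
  have hpow (k : ℕ) : Tendsto (fun n => q ^ (n - k)) atTop (𝓝 0) :=
    (tendsto_pow_atTop_nhds_zero_of_lt_one hq0 hq1).comp (tendsto_sub_atTop_nat k)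
  have hpow' : Tendsto (fun n => q ^ (n - i - 1)) atTop (𝓝 0) := by
    simpa only [Nat.sub_sub] using hpow (i + 1)
  have hne : (1 - q ^ (1 + i)) * (1 - t * 0) ≠ 0 := by
    rw [add_comm 1 i, mul_zero, sub_zero, mul_one]
    exact (one_sub_pow_succ_pos hq0 hq1 i).ne'
  have hlim := (((tendsto_const_nhds (x := (1 : ℝ))).sub (hpow i)).mul
    (tendsto_const_nhds (x := 1 - t * q ^ i))).div
    ((tendsto_const_nhds (x := 1 - q ^ (1 + i))).mul
      ((tendsto_const_nhds (x := (1 : ℝ))).sub (hpow'.const_mul t))) hne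
  simp only [sub_zero, mul_zero, one_mul, mul_one, add_comm 1 i] at hlim ⊢
  exact hlim

lemma norm_qBinomCoeff_mul_pow_le (hq0 : 0 ≤ q) (hq1 : q < 1) (ht0 : 0 ≤ t) (ht1 : t < 1)
    (j : ℕ) {w : ℂ} {r : ℝ} (hw : ‖w‖ ≤ r) :
    ‖(qBinomCoeff q t j : ℂ) * w ^ j‖ ≤ Real.exp (q / (1 - q) ^ 2) * r ^ j := by
  rw [norm_mul, Complex.norm_real, Real.norm_of_nonneg (qBinomCoeff_pos hq0 hq1 ht0 ht1 j).le,
    norm_pow]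
  exact mul_le_mul (qBinomCoeff_le hq0 hq1 ht0 ht1 j) (pow_le_pow_left₀ (norm_nonneg w) hw j)
    (by positivity) (Real.exp_pos _).le

lemma summable_qBinomialSeries (hq0 : 0 ≤ q) (hq1 : q < 1) (ht0 : 0 ≤ t) (ht1 : t < 1)
    {z : ℂ} (hz : ‖z‖ < 1) : Summable fun j => (qBinomCoeff q t j : ℂ) * z ^ j :=
  Summable.of_norm_bounded ((summable_geometric_of_lt_one (norm_nonneg z) hz).mul_left _)
    fun j => norm_qBinomCoeff_mul_pow_le hq0 hq1 ht0 ht1 j le_rfl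

lemma qBinomialSeries_zero : qBinomialSeries q t 0 = 1 := by
  rw [qBinomialSeries, tsum_eq_single 0 fun j hj => by simp [hj]]
  simp [qBinomCoeff_zero]

lemma one_sub_mul_qBinomialSeries (hq0 : 0 ≤ q) (hq1 : q < 1) (ht0 : 0 ≤ t) (ht1 : t < 1)
    {z : ℂ} (hz : ‖z‖ < 1) :
    (1 - z) * qBinomialSeries q t z = (1 - t * z) * qBinomialSeries q t (q * z) := by
  set E : ℕ → ℂ := fun j => (qBinomCoeff q t j : ℂ) * (1 - (q : ℂ) ^ j) * z ^ j with hE_def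
  have hqz : ‖(q : ℂ) * z‖ < 1 := by
    simpa only [pow_one] using (norm_ofReal_pow_mul_le hq0 hq1.le 1 z).trans_lt hz
  have hF := summable_qBinomialSeries hq0 hq1 ht0 ht1 hz
  have hG := summable_qBinomialSeries hq0 hq1 ht0 ht1 hqz
  have hE : Summable E := (hF.sub hG).congr fun j => by simp only [hE_def]; ring
  -- `qBinomCoeff_succ_mul` makes the difference of the two series telescope
  have htelescope (j : ℕ) : (1 - z) * ((qBinomCoeff q t j : ℂ) * z ^ j) -
      (1 - t * z) * ((qBinomCoeff q t j : ℂ) * (q * z) ^ j) = E j - E (j + 1) := by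
    have hrec := congrArg (fun x : ℝ => (x : ℂ)) (qBinomCoeff_succ_mul (t := t) hq0 hq1 j)
    push_cast at hrec
    simp only [hE_def]
    linear_combination z ^ (j + 1) * hrec
  rw [← sub_eq_zero, qBinomialSeries, qBinomialSeries, ← tsum_mul_left, ← tsum_mul_left,
    ← (hF.mul_left _).tsum_sub (hG.mul_left _), tsum_congr htelescope,
    hE.tsum_sub ((summable_nat_add_iff 1).mpr hE), hE.tsum_eq_zero_add]
  simp [hE_def]

lemma qBinomialSeries_eq_prod_mul (hq0 : 0 ≤ q) (hq1 : q < 1) (ht0 : 0 ≤ t) (ht1 : t < 1)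
    {z : ℂ} (hz : ‖z‖ < 1) (m : ℕ) :
    qBinomialSeries q t z = (∏ i ∈ range m, (1 - t * z * q ^ i) / (1 - z * q ^ i)) *
      qBinomialSeries q t (q ^ m * z) := by
  induction m with
  | zero => simp
  | succ m ih =>
    have hw : ‖(q : ℂ) ^ m * z‖ < 1 := (norm_ofReal_pow_mul_le hq0 hq1.le m z).trans_lt hz
    have hne : 1 - z * q ^ m ≠ 0 := by
      rw [mul_comm]
      exact one_sub_ne_zero_of_norm_lt_one hw
    have hfun := one_sub_mul_qBinomialSeries hq0 hq1 ht0 ht1 hw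
    rw [prod_range_succ, pow_succ' (q : ℂ) m, mul_assoc (q : ℂ), ih, mul_assoc]
    congr 1
    rw [div_mul_eq_mul_div, eq_div_iff hne]
    linear_combination hfun

lemma tendsto_qBinomialSeries_pow_mul (hq0 : 0 ≤ q) (hq1 : q < 1) (ht0 : 0 ≤ t) (ht1 : t < 1)
    {z : ℂ} (hz : ‖z‖ < 1) :
    Tendsto (fun m => qBinomialSeries q t (q ^ m * z)) atTop (𝓝 1) := by
  have hlim : Tendsto (fun m => (q : ℂ) ^ m * z) atTop (𝓝 0) := by
    have hq : ‖(q : ℂ)‖ < 1 := by rwa [Complex.norm_real, Real.norm_of_nonneg hq0]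
    simpa using (tendsto_pow_atTop_nhds_zero_of_norm_lt_one hq).mul_const z
  rw [← qBinomialSeries_zero (q := q) (t := t)]
  exact tendsto_tsum_of_dominated_convergence
    ((summable_geometric_of_lt_one (norm_nonneg z) hz).mul_left _)
    (fun j => (hlim.pow j).const_mul _)
    (Eventually.of_forall fun m j =>
      norm_qBinomCoeff_mul_pow_le hq0 hq1 ht0 ht1 j (norm_ofReal_pow_mul_le hq0 hq1.le m z))

lemma multipliable_one_sub_mul_pow_div (hq0 : 0 ≤ q) (hq1 : q < 1) (a : ℂ) {b : ℂ}
    (hb : ‖b‖ < 1) : Multipliable fun i : ℕ => (1 - a * q ^ i) / (1 - b * q ^ i) := by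
  have hbq (i : ℕ) : ‖b * q ^ i‖ ≤ ‖b‖ := by
    rw [mul_comm]
    exact norm_ofReal_pow_mul_le hq0 hq1.le i b
  have hsum : Summable fun i : ℕ => (b - a) * q ^ i / (1 - b * q ^ i) := by
    refine Summable.of_norm_bounded
      ((summable_geometric_of_lt_one hq0 hq1).mul_left (‖b - a‖ / (1 - ‖b‖))) fun i => ?_
    have hlow : 1 - ‖b‖ ≤ ‖1 - b * q ^ i‖ := by
      have := norm_sub_norm_le (1 : ℂ) (b * q ^ i)
      rw [norm_one] at this
      linarith [hbq i]
    rw [norm_div, norm_mul, norm_pow, Complex.norm_real, Real.norm_of_nonneg hq0]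
    calc ‖b - a‖ * q ^ i / ‖1 - b * q ^ i‖ ≤ ‖b - a‖ * q ^ i / (1 - ‖b‖) :=
          div_le_div_of_nonneg_left (by positivity) (sub_pos.2 hb) hlow
      _ = ‖b - a‖ / (1 - ‖b‖) * q ^ i := by ring
  refine (Complex.multipliable_one_add_of_summable hsum).congr fun i => ?_
  have hne := one_sub_ne_zero_of_norm_lt_one ((hbq i).trans_lt hb)
  field_simp
  ring

theorem hasProd_qBinomialSeries (hq0 : 0 ≤ q) (hq1 : q < 1) (ht0 : 0 ≤ t) (ht1 : t < 1)
    {z : ℂ} (hz : ‖z‖ < 1) :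
    HasProd (fun i : ℕ => (1 - t * z * q ^ i) / (1 - z * q ^ i)) (qBinomialSeries q t z) := by
  have hmul := multipliable_one_sub_mul_pow_div hq0 hq1 (t * z) hz
  have hlim := hmul.hasProd.tendsto_prod_nat.mul
    (tendsto_qBinomialSeries_pow_mul hq0 hq1 ht0 ht1 hz)
  simp_rw [← qBinomialSeries_eq_prod_mul hq0 hq1 ht0 ht1 hz, mul_one] at hlim
  rw [tendsto_nhds_unique tendsto_const_nhds hlim]
  exact hmul.hasProd

lemma qBinomialSeries_ofReal_ne_zero (hq0 : 0 ≤ q) (hq1 : q < 1) (ht0 : 0 ≤ t) (ht1 : t < 1)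
    {x : ℝ} (hx0 : 0 ≤ x) (hx1 : x < 1) : qBinomialSeries q t x ≠ 0 := by
  have hsum : Summable fun j => qBinomCoeff q t j * x ^ j := by
    have := summable_qBinomialSeries hq0 hq1 ht0 ht1 (z := x)
      (by rwa [Complex.norm_real, Real.norm_of_nonneg hx0])
    exact_mod_cast this
  have hone : 1 ≤ ∑' j, qBinomCoeff q t j * x ^ j := by
    simpa [qBinomCoeff_zero] using hsum.le_tsum 0 fun j _ =>
      mul_nonneg (qBinomCoeff_pos hq0 hq1 ht0 ht1 j).le (pow_nonneg hx0 j)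
  rw [qBinomialSeries]
  exact_mod_cast (by linarith : ∑' j, qBinomCoeff q t j * x ^ j ≠ 0)

lemma pow_mul_Msym_sub {X : ℂ} (hX0 : X ≠ 0) {n j : ℕ} (h : 2 * j < n) :
    X ^ n * Msym (n - 2 * j) X = X ^ (n + (n - 2 * j)) + (X ^ 2) ^ j := by
  rw [Msym, if_neg (by omega), mul_add, ← pow_add, inv_pow, pow_sub₀ X hX0 h.le, ← pow_mul]
  field_simp

lemma norm_pow_mul_Msym_le {X : ℂ} (hX0 : X ≠ 0) (hX1 : ‖X‖ ≤ 1) {n j : ℕ} (h : 2 * j ≤ n) :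
    ‖X ^ n * Msym (n - 2 * j) X‖ ≤ 2 * (‖X‖ ^ 2) ^ j := by
  rcases h.eq_or_lt with rfl | h
  · simp only [Nat.sub_self, Msym, if_pos, mul_one, norm_pow, ← pow_mul]
    linarith [pow_nonneg (norm_nonneg X) (2 * j)]
  · rw [pow_mul_Msym_sub hX0 h]
    calc _ ≤ ‖X‖ ^ (n + (n - 2 * j)) + (‖X‖ ^ 2) ^ j := by
          refine (norm_add_le _ _).trans_eq ?_
          rw [norm_pow, norm_pow, norm_pow]
      _ ≤ (‖X‖ ^ 2) ^ j + (‖X‖ ^ 2) ^ j := by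
          gcongr
          rw [← pow_mul]
          exact pow_le_pow_of_le_one (norm_nonneg X) hX1 (by omega)
      _ = 2 * (‖X‖ ^ 2) ^ j := by ring

lemma tendsto_pow_mul_Msym {X : ℂ} (hX0 : X ≠ 0) (hX1 : ‖X‖ < 1) (j : ℕ) :
    Tendsto (fun n => X ^ n * Msym (n - 2 * j) X) atTop (𝓝 ((X ^ 2) ^ j)) := by
  have hpow : Tendsto (fun n => X ^ (n + (n - 2 * j))) atTop (𝓝 0) :=
    (tendsto_pow_atTop_nhds_zero_of_norm_lt_one hX1).comp
      (tendsto_atTop_mono (fun n => Nat.le_add_right n _) tendsto_id)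
  have hlim := hpow.add_const ((X ^ 2) ^ j)
  rw [zero_add] at hlim
  refine hlim.congr' ?_
  filter_upwards [eventually_gt_atTop (2 * j)] with n hn
  exact (pow_mul_Msym_sub hX0 hn).symm

def rogersTerm (q t : ℝ) (X : ℂ) (n j : ℕ) : ℂ :=
  if 2 * j ≤ n then (rogersCoeff q t n j : ℂ) * (X ^ n * Msym (n - 2 * j) X) else 0

lemma pow_mul_RogersA1_eq_tsum (q t : ℝ) (X : ℂ) (n : ℕ) :
    X ^ n * RogersA1 q t n X = ∑' j, rogersTerm q t X n j := by
  have hrange : range (n / 2 + 1) = insert 0 (Icc 1 (n / 2)) := by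
    ext j
    simp only [mem_range, mem_insert, mem_Icc]
    omega
  rw [tsum_eq_sum (s := range (n / 2 + 1)) fun j hj => by
      rw [rogersTerm, if_neg (by rw [mem_range] at hj; omega)],
    hrange, sum_insert (by simp), RogersA1, mul_add, mul_sum]
  congr 1
  · simp [rogersTerm, rogersCoeff]
  · refine sum_congr rfl fun j hj => ?_
    rw [mem_Icc] at hj
    rw [rogersTerm, if_pos (by omega), rogersCoeff]
    push_cast
    ring

lemma norm_rogersTerm_le (hq0 : 0 ≤ q) (hq1 : q < 1) (ht0 : 0 ≤ t) (ht1 : t < 1) {X : ℂ}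
    (hX0 : X ≠ 0) (hX1 : ‖X‖ ≤ 1) (n j : ℕ) :
    ‖rogersTerm q t X n j‖ ≤ Real.exp (q / (1 - q) ^ 2) * (2 * (‖X‖ ^ 2) ^ j) := by
  unfold rogersTerm
  split_ifs with h
  · rw [norm_mul, Complex.norm_real, Real.norm_eq_abs]
    exact mul_le_mul (abs_rogersCoeff_le hq0 hq1 ht0 ht1 h) (norm_pow_mul_Msym_le hX0 hX1 h)
      (norm_nonneg _) (Real.exp_pos _).le
  · rw [norm_zero]
    positivity

lemma tendsto_rogersTerm (hq0 : 0 ≤ q) (hq1 : q < 1) {X : ℂ} (hX0 : X ≠ 0) (hX1 : ‖X‖ < 1)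
    (j : ℕ) :
    Tendsto (fun n => rogersTerm q t X n j) atTop (𝓝 (qBinomCoeff q t j * (X ^ 2) ^ j)) := by
  refine (((Complex.continuous_ofReal.tendsto _).comp (tendsto_rogersCoeff hq0 hq1 j)).mul
    (tendsto_pow_mul_Msym hX0 hX1 j)).congr' ?_
  filter_upwards [eventually_ge_atTop (2 * j)] with n hn
  simp [rogersTerm, hn]

theorem tendsto_pow_mul_RogersA1 (hq0 : 0 ≤ q) (hq1 : q < 1) (ht0 : 0 ≤ t) (ht1 : t < 1)
    {X : ℂ} (hX0 : X ≠ 0) (hX1 : ‖X‖ < 1) :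
    Tendsto (fun n => X ^ n * RogersA1 q t n X) atTop (𝓝 (qBinomialSeries q t (X ^ 2))) := by
  have hX2 : ‖X‖ ^ 2 < 1 := pow_lt_one₀ (norm_nonneg X) hX1 two_ne_zero
  simp_rw [pow_mul_RogersA1_eq_tsum]
  exact tendsto_tsum_of_dominated_convergence
    (((summable_geometric_of_lt_one (by positivity) hX2).mul_left 2).mul_left _)
    (tendsto_rogersTerm hq0 hq1 hX0 hX1)
    (Eventually.of_forall (norm_rogersTerm_le hq0 hq1 ht0 ht1 hX0 hX1.le))

end RogersA1

open RogersA1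

/-- Harish-Chandra-type asymptotics of the normalized (spherical)
Rogers polynomials of type A₁. -/
theorem rogersA1_spherical_asymptotics (q s : ℝ) (hq0 : 0 < q) (hq1 : q < 1)
    (hs0 : 0 < s) (hs1 : s < 1) (Λ : ℂ) (hΛ0 : Λ ≠ 0) (hΛ1 : ‖Λ‖ < 1) :
    Filter.Tendsto (fun n : ℕ =>
        (Λ / (s : ℂ)) ^ n * RogersA1 q ((s : ℂ) ^ 2) n Λ / RogersA1 q ((s : ℂ) ^ 2) n (s : ℂ))
      Filter.atTop
      (nhds (∏' j : ℕ,
        ((1 - (s : ℂ) ^ 2 * Λ ^ 2 * (q : ℂ) ^ j) * (1 - (s : ℂ) ^ 2 * (q : ℂ) ^ j)) /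
        ((1 - Λ ^ 2 * (q : ℂ) ^ j) * (1 - ((s : ℂ) ^ 2) ^ 2 * (q : ℂ) ^ j)))) := by
  have ht0 : 0 ≤ s ^ 2 := sq_nonneg s
  have ht1 : s ^ 2 < 1 := pow_lt_one₀ hs0.le hs1 two_ne_zero
  have hsC : ‖(s : ℂ)‖ < 1 := by rwa [Complex.norm_real, Real.norm_of_nonneg hs0.le]
  have hΛ2 : ‖Λ ^ 2‖ < 1 := by rw [norm_pow]; exact pow_lt_one₀ (norm_nonneg Λ) hΛ1 two_ne_zero
  have ht : ‖((s ^ 2 : ℝ) : ℂ)‖ < 1 := by rwa [Complex.norm_real, Real.norm_of_nonneg ht0]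
  have hnum := tendsto_pow_mul_RogersA1 hq0.le hq1 ht0 ht1 hΛ0 hΛ1
  have hden := tendsto_pow_mul_RogersA1 hq0.le hq1 ht0 ht1 (Complex.ofReal_ne_zero.2 hs0.ne') hsC
  have hne := qBinomialSeries_ofReal_ne_zero hq0.le hq1 ht0 ht1 ht0 ht1
  have hprod := (hasProd_qBinomialSeries hq0.le hq1 ht0 ht1 hΛ2).div₀
    (hasProd_qBinomialSeries hq0.le hq1 ht0 ht1 ht) hne
  push_cast at hnum hden hne hprod
  rw [(hprod.congr_fun fun j => ?_).tprod_eq]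
  · refine (hnum.div hden hne).congr fun n => ?_
    rw [Pi.div_apply]
    ring
  · rw [div_div_div_eq]
    ring
end
end
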